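/- arXiv:1411.5208 — 3 statements merged into one kernel-verified Lean document; each statement's English description precedes it below -/
import Mathlib

section
/- Let g : (0,∞) → [0,∞) be locally integrable with g(t) → 0 as t → ∞, and let α : (−1,1) → ℝ be integrable with ∫_{−1}^{1} α(t) dt = 0 and ∫_{−1}^{σ} α(t) dt > 0 for every σ ∈ (−1,1). Then for every R₀ > 0 there exists R ≥ R₀ such that ∫_{−1}^{1} α(t) g(t+R) dt ≥ 0; moreover, if g is not eventually zero (i.e. for every T there is a positive-measure set of t > T with g(t) > 0), then R can be chosen so that the inequality is strict. -/
open MeasureTheory Filter Set Topology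

namespace Lem34


noncomputable def Aa (α : ℝ → ℝ) (σ : ℝ) : ℝ := ∫ t in (-1:ℝ)..σ, α t
noncomputable def Kk (g : ℝ → ℝ) (R t : ℝ) : ℝ := ∫ s in t..(1:ℝ), g (s + R)
noncomputable def Φf (g α : ℝ → ℝ) (R : ℝ) : ℝ := ∫ t in Ioo (-1:ℝ) 1, g (t + R) * α t
noncomputable def Ψf (g α : ℝ → ℝ) (R : ℝ) : ℝ := ∫ s in Ioo (-1:ℝ) 1, Aa α s * g (s + R)

lemma ae_add_right {P : ℝ → Prop} (h : ∀ᵐ x, P x) (c : ℝ) : ∀ᵐ x : ℝ, P (x + c) :=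
  (measurePreserving_add_right volume c).quasiMeasurePreserving.ae h

lemma shiftII (g : ℝ → ℝ) (hgint : ∀ a b : ℝ, 1 ≤ a → IntegrableOn g (Icc a b) volume)
    {a b : ℝ} (ha : 1 ≤ a) (hb : a ≤ b) : IntervalIntegrable g volume a b := by
  have := hgint a b ha
  rw [← uIcc_of_le hb] at this
  exact this.intervalIntegrable

lemma shiftIcc (g : ℝ → ℝ) (hgint : ∀ a b : ℝ, 1 ≤ a → IntegrableOn g (Icc a b) volume)
    {R : ℝ} (hR : 2 ≤ R) : IntegrableOn (fun s => g (s + R)) (Icc (-1:ℝ) 1) volume := by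
  have h1 : IntervalIntegrable g volume (R - 1) (R + 1) :=
    shiftII g hgint (by linarith) (by linarith)
  have h2 := h1.comp_add_right R
  have e1 : R - 1 - R = (-1:ℝ) := by ring
  have e2 : R + 1 - R = (1:ℝ) := by ring
  rw [e1, e2] at h2
  exact (intervalIntegrable_iff_integrableOn_Icc_of_le (by norm_num)).1 h2

lemma shiftIoo (g : ℝ → ℝ) (hgint : ∀ a b : ℝ, 1 ≤ a → IntegrableOn g (Icc a b) volume)
    {R : ℝ} (hR : 2 ≤ R) : IntegrableOn (fun s => g (s + R)) (Ioo (-1:ℝ) 1) volume :=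
  (shiftIcc g hgint hR).mono_set Ioo_subset_Icc_self

lemma Abound (α : ℝ → ℝ) (hαint : IntegrableOn α (Ioo (-1:ℝ) 1) volume)
    {σ : ℝ} (hσ : σ ∈ Icc (-1:ℝ) 1) : ‖Aa α σ‖ ≤ ∫ t in Ioo (-1:ℝ) 1, ‖α t‖ := by
  have h1 : ‖Aa α σ‖ ≤ ∫ t in (-1:ℝ)..σ, ‖α t‖ :=
    intervalIntegral.norm_integral_le_integral_norm hσ.1
  have h2 : (∫ t in (-1:ℝ)..σ, ‖α t‖) = ∫ t in Ioo (-1:ℝ) σ, ‖α t‖ := by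
    rw [intervalIntegral.integral_of_le hσ.1, integral_Ioc_eq_integral_Ioo]
  have h3 : (∫ t in Ioo (-1:ℝ) σ, ‖α t‖) ≤ ∫ t in Ioo (-1:ℝ) 1, ‖α t‖ := by
    apply setIntegral_mono_set hαint.norm
    · exact ae_restrict_of_ae (Eventually.of_forall fun t => norm_nonneg _)
    · exact HasSubset.Subset.eventuallyLE (Ioo_subset_Ioo le_rfl hσ.2)
  calc ‖Aa α σ‖ ≤ _ := h1
    _ = _ := h2
    _ ≤ _ := h3

lemma Acont (α : ℝ → ℝ) (hαint : IntegrableOn α (Ioo (-1:ℝ) 1) volume) :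
    ContinuousOn (Aa α) (Icc (-1:ℝ) 1) := by
  have h : IntegrableOn α (Icc (-1:ℝ) 1) volume :=
    (integrableOn_Icc_iff_integrableOn_Ioo).2 hαint
  apply (intervalIntegral.continuousOn_primitive h).congr
  intro x hx
  rw [Aa, intervalIntegral.integral_of_le hx.1]

lemma Kcont (g : ℝ → ℝ) (hgint : ∀ a b : ℝ, 1 ≤ a → IntegrableOn g (Icc a b) volume)
    {R : ℝ} (hR : 2 ≤ R) : ContinuousOn (Kk g R) (Icc (-1:ℝ) 1) := by
  have hIcc : IntegrableOn (fun s => g (s + R)) (Icc (-1:ℝ) 1) volume := shiftIcc g hgint hR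
  have hii : ∀ x y, x ∈ Icc (-1:ℝ) 1 → y ∈ Icc (-1:ℝ) 1 →
      IntervalIntegrable (fun s => g (s + R)) volume x y := fun x y hx hy =>
    (hIcc.mono_set (uIcc_subset_Icc hx hy)).intervalIntegrable
  have hc : ContinuousOn (fun t => (∫ s in Ioc (-1:ℝ) 1, g (s + R))
      - ∫ s in Ioc (-1:ℝ) t, g (s + R)) (Icc (-1:ℝ) 1) :=
    continuousOn_const.sub (intervalIntegral.continuousOn_primitive hIcc)
  apply hc.congr
  intro t ht
  have hadd := intervalIntegral.integral_add_adjacent_intervals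
    (hii (-1) t (by norm_num) ht) (hii t 1 ht (by norm_num))
  have h1 : (∫ s in Ioc (-1:ℝ) t, g (s + R)) = ∫ s in (-1:ℝ)..t, g (s + R) :=
    (intervalIntegral.integral_of_le ht.1).symm
  have h2 : (∫ s in Ioc (-1:ℝ) 1, g (s + R)) = ∫ s in (-1:ℝ)..1, g (s + R) :=
    (intervalIntegral.integral_of_le (by norm_num)).symm
  simp only [Kk]
  rw [h1, h2]
  linarith

lemma Knonneg (g : ℝ → ℝ) (hg0 : ∀ x, 0 ≤ g x) {R t : ℝ} (ht : t ≤ 1) : 0 ≤ Kk g R t :=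
  intervalIntegral.integral_nonneg ht (fun u _ => hg0 _)

lemma Kbound (g : ℝ → ℝ) (hgint : ∀ a b : ℝ, 1 ≤ a → IntegrableOn g (Icc a b) volume)
    (hg0 : ∀ x, 0 ≤ g x) {R : ℝ} (hR : 2 ≤ R) {t : ℝ} (ht : t ∈ Icc (-1:ℝ) 1) :
    Kk g R t ≤ ∫ s in (-1:ℝ)..1, g (s + R) := by
  have hIcc : IntegrableOn (fun s => g (s + R)) (Icc (-1:ℝ) 1) volume := shiftIcc g hgint hR
  apply intervalIntegral.integral_mono_interval ht.1 ht.2 le_rfl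
  · exact ae_restrict_of_ae (Eventually.of_forall fun u => hg0 _)
  · exact (hIcc.mono_set (by rw [uIcc_of_le (by norm_num : (-1:ℝ) ≤ 1)])).intervalIntegrable

lemma PsiK (g α : ℝ → ℝ)
    (hshift : IntegrableOn (fun s => g (s + R)) (Ioo (-1:ℝ) 1) volume)
    (hαint : IntegrableOn α (Ioo (-1:ℝ) 1) volume) :
    Ψf g α R = ∫ t in Ioo (-1:ℝ) 1, Kk g R t * α t := by
  set μ := volume.restrict (Ioo (-1:ℝ) 1) with hμ
  set f : ℝ → ℝ → ℝ := fun s t => if t < s then g (s + R) * α t else 0 with hf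
  have hbase : Integrable (fun p : ℝ × ℝ => g (p.1 + R) * α p.2) (μ.prod μ) :=
    Integrable.mul_prod hshift hαint
  have hfint : Integrable (Function.uncurry f) (μ.prod μ) := by
    have := hbase.indicator (measurableSet_lt measurable_snd measurable_fst)
    apply this.congr
    apply Eventually.of_forall
    intro p
    simp only [Function.uncurry, hf, Set.indicator_apply, Set.mem_setOf_eq]
  have hswap := integral_integral_swap hfint
  -- LHS: ∫ s, ∫ t, f s t ∂μ ∂μ = Ψf
  have hL : (∫ s, ∫ t, f s t ∂μ ∂μ) = Ψf g α R := by
    rw [hμ, Ψf]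
    apply setIntegral_congr_fun measurableSet_Ioo
    intro s hs
    show (∫ t in Ioo (-1:ℝ) 1, f s t) = Aa α s * g (s + R)
    have hind : (fun t => f s t) = (Iio s).indicator (fun t => g (s + R) * α t) := by
      funext t; simp only [hf, Set.indicator_apply, Set.mem_Iio]
    rw [hind, setIntegral_indicator measurableSet_Iio]
    have hset : Ioo (-1:ℝ) 1 ∩ Iio s = Ioo (-1:ℝ) s := by
      rw [Set.Ioo_inter_Iio, min_eq_right hs.2.le]
    rw [hset, MeasureTheory.integral_const_mul]
    have : Aa α s = ∫ t in Ioo (-1:ℝ) s, α t := by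
      rw [Aa, intervalIntegral.integral_of_le hs.1.le, integral_Ioc_eq_integral_Ioo]
    rw [this, mul_comm]
  -- RHS: ∫ t, ∫ s, f s t ∂μ ∂μ = ∫ t, Kk R t * α t
  have hR : (∫ t, ∫ s, f s t ∂μ ∂μ) = ∫ t in Ioo (-1:ℝ) 1, Kk g R t * α t := by
    rw [hμ]
    apply setIntegral_congr_fun measurableSet_Ioo
    intro t ht
    show (∫ s in Ioo (-1:ℝ) 1, f s t) = Kk g R t * α t
    have hind : (fun s => f s t) = (Ioi t).indicator (fun s => g (s + R) * α t) := by
      funext s; simp only [hf, Set.indicator_apply, Set.mem_Ioi]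
    rw [hind, setIntegral_indicator measurableSet_Ioi]
    have hset : Ioo (-1:ℝ) 1 ∩ Ioi t = Ioo t 1 := by
      rw [Set.Ioo_inter_Ioi, max_eq_right ht.1.le]
    rw [hset, MeasureTheory.integral_mul_const]
    have : Kk g R t = ∫ s in Ioo t 1, g (s + R) := by
      rw [Kk, intervalIntegral.integral_of_le ht.2.le, integral_Ioc_eq_integral_Ioo]
    rw [this]
  rw [← hL, ← hR]
  exact hswap

lemma shiftII' (g : ℝ → ℝ) (hgint : ∀ a b : ℝ, 1 ≤ a → IntegrableOn g (Icc a b) volume)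
    {a b : ℝ} (ha : 1 ≤ a) (hb : 1 ≤ b) : IntervalIntegrable g volume a b := by
  rcases le_total a b with h | h
  · exact shiftII g hgint ha h
  · exact (shiftII g hgint hb h).symm

lemma KmulInt (g α : ℝ → ℝ) (hgint : ∀ a b : ℝ, 1 ≤ a → IntegrableOn g (Icc a b) volume)
    (hg0 : ∀ x, 0 ≤ g x) (hαint : IntegrableOn α (Ioo (-1:ℝ) 1) volume)
    {R : ℝ} (hR : 2 ≤ R) :
    Integrable (fun t => Kk g R t * α t) (volume.restrict (Ioo (-1:ℝ) 1)) := by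
  apply hαint.bdd_mul (c := ∫ s in (-1:ℝ)..1, g (s + R))
  · exact ((Kcont g hgint hR).mono Ioo_subset_Icc_self).aestronglyMeasurable measurableSet_Ioo
  · refine (ae_restrict_mem measurableSet_Ioo).mono fun t ht => ?_
    have h1 := Knonneg g hg0 (R := R) (t := t) ht.2.le
    have h2 := Kbound g hgint hg0 hR (t := t) (Ioo_subset_Icc_self ht)
    rw [Real.norm_eq_abs, abs_of_nonneg h1]
    exact h2

lemma PhiPsi (g α : ℝ → ℝ) (hgm : Measurable g) (hαm : Measurable α)
    (hg0 : ∀ x, 0 ≤ g x)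
    (hgint : ∀ a b : ℝ, 1 ≤ a → IntegrableOn g (Icc a b) volume)
    (hαint : IntegrableOn α (Ioo (-1:ℝ) 1) volume)
    (hα0 : (∫ t in Ioo (-1:ℝ) 1, α t) = 0)
    {a b : ℝ} (ha : 2 ≤ a) (hab : a ≤ b) :
    IntegrableOn (Φf g α) (Ioo a b) volume ∧
      (∫ R in Ioo a b, Φf g α R) = Ψf g α a - Ψf g α b := by
  set I : Set ℝ := Ioo (-1:ℝ) 1 with hI
  set μI := volume.restrict I
  set μJ := volume.restrict (Ioo a b) with hμJ
  set f2 : ℝ → ℝ → ℝ := fun t R => g (t + R) * α t with hf2def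
  have asm : AEStronglyMeasurable (Function.uncurry f2) (μI.prod μJ) :=
    ((hgm.comp (measurable_fst.add measurable_snd)).mul
      (hαm.comp measurable_fst)).aestronglyMeasurable
  -- inner translation identity
  have htrans : ∀ t ∈ I, (∫ R in Ioo a b, g (t + R)) = ∫ x in (t+a)..(t+b), g x := by
    intro t ht
    rw [← integral_Ioc_eq_integral_Ioo, ← intervalIntegral.integral_of_le hab]
    exact intervalIntegral.integral_comp_add_left g t
  have hDbig : ∀ t ∈ I, (∫ x in (t+a)..(t+b), g x) ≤ ∫ x in (a-1)..(b+1), g x := by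
    intro t ht
    apply intervalIntegral.integral_mono_interval (by nlinarith [ht.1, ht.2] : a - 1 ≤ t + a)
      (by linarith : t + a ≤ t + b) (by nlinarith [ht.1, ht.2] : t + b ≤ b + 1)
      (ae_restrict_of_ae (Eventually.of_forall fun u => hg0 u))
      (shiftII' g hgint (by linarith) (by linarith))
  -- slices are integrable
  have hslice : ∀ t ∈ I, Integrable (fun R => g (t + R) * α t) μJ := by
    intro t ht
    have h1 : IntervalIntegrable g volume (t + a) (t + b) :=
      shiftII' g hgint (by linarith [ht.1]) (by linarith [ht.1])
    have h2 := h1.comp_add_left t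
    have e1 : t + a - t = a := by ring
    have e2 : t + b - t = b := by ring
    rw [e1, e2] at h2
    exact ((intervalIntegrable_iff_integrableOn_Ioo_of_le hab).1 h2).mul_const (α t)
  -- integrability of the norm-integral function
  have hnormint : Integrable (fun t => ∫ R, ‖Function.uncurry f2 (t, R)‖ ∂μJ) μI := by
    apply Integrable.mono' (hαint.norm.mul_const (∫ x in (a-1)..(b+1), g x))
      (asm.norm.integral_prod_right')
    refine (ae_restrict_mem measurableSet_Ioo).mono fun t ht => ?_
    have hval : ∀ R, ‖Function.uncurry f2 (t, R)‖ = g (t + R) * ‖α t‖ := by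
      intro R
      simp only [Function.uncurry, hf2def, Real.norm_eq_abs, abs_mul, abs_of_nonneg (hg0 (t + R))]
    simp only [hval]
    rw [MeasureTheory.integral_mul_const]
    have hnn : 0 ≤ ∫ R, g (t + R) ∂μJ :=
      integral_nonneg fun R => hg0 _
    rw [Real.norm_eq_abs, abs_of_nonneg (mul_nonneg hnn (norm_nonneg _)), mul_comm (‖α t‖)]
    apply mul_le_mul_of_nonneg_right _ (norm_nonneg _)
    rw [hμJ]
    calc (∫ R in Ioo a b, g (t + R)) = ∫ x in (t+a)..(t+b), g x := htrans t ht
      _ ≤ _ := hDbig t ht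
  have hf2 : Integrable (Function.uncurry f2) (μI.prod μJ) := by
    refine (integrable_prod_iff asm).2 ⟨?_, hnormint⟩
    exact (ae_restrict_mem measurableSet_Ioo).mono hslice
  -- Φ integrable
  have hΦint : IntegrableOn (Φf g α) (Ioo a b) volume := by
    have := hf2.swap.integral_prod_left
    exact this.congr (Eventually.of_forall fun R => rfl)
  refine ⟨hΦint, ?_⟩
  -- Fubini swap
  have hswap := integral_integral_swap hf2
  have hRHS : (∫ R, ∫ t, f2 t R ∂μI ∂μJ) = ∫ R in Ioo a b, Φf g α R := rfl
  set D : ℝ := ∫ x in (1+a)..(1+b), g x with hD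
  have hLHS : (∫ t, ∫ R, f2 t R ∂μJ ∂μI)
      = ∫ t in I, (Kk g a t + D - Kk g b t) * α t := by
    apply setIntegral_congr_fun measurableSet_Ioo
    intro t ht
    show (∫ R, f2 t R ∂μJ) = (Kk g a t + D - Kk g b t) * α t
    have : (∫ R, f2 t R ∂μJ) = (∫ R in Ioo a b, g (t + R)) * α t := by
      rw [hμJ]; exact MeasureTheory.integral_mul_const _ _
    rw [this, htrans t ht]
    congr 1
    -- ∫ x in t+a..t+b = Kk g a t + D - Kk g b t
    have i1 : IntervalIntegrable g volume (t+a) (1+a) :=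
      shiftII' g hgint (by linarith [ht.1]) (by linarith)
    have i2 : IntervalIntegrable g volume (1+a) (1+b) :=
      shiftII' g hgint (by linarith) (by linarith)
    have i3 : IntervalIntegrable g volume (1+b) (t+b) :=
      shiftII' g hgint (by linarith) (by linarith [ht.1])
    have h12 := intervalIntegral.integral_add_adjacent_intervals i1 i2
    have h123 := intervalIntegral.integral_add_adjacent_intervals (i1.trans i2) i3
    have hKa : Kk g a t = ∫ x in (t+a)..(1+a), g x := by
      simp only [Kk]; exact intervalIntegral.integral_comp_add_right g a
    have hKb : Kk g b t = ∫ x in (t+b)..(1+b), g x := by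
      simp only [Kk]; exact intervalIntegral.integral_comp_add_right g b
    have hsym : (∫ x in (1+b)..(t+b), g x) = - ∫ x in (t+b)..(1+b), g x :=
      intervalIntegral.integral_symm _ _
    rw [hKa, hKb, hD]
    rw [← h123, h12] at *
    linarith [h12, h123]
  -- now split the integral
  have hKaInt := KmulInt g α hgint hg0 hαint ha
  have hKbInt := KmulInt g α hgint hg0 hαint (le_trans ha hab)
  have hDInt : Integrable (fun t => D * α t) μI := hαint.const_mul D
  have hsplit : (∫ t in I, (Kk g a t + D - Kk g b t) * α t)
      = (∫ t in I, Kk g a t * α t) + (∫ t in I, D * α t) - ∫ t in I, Kk g b t * α t := by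
    have heq : (fun t => (Kk g a t + D - Kk g b t) * α t)
        = fun t => (Kk g a t * α t + D * α t) - Kk g b t * α t := by
      funext t; ring
    have h4 : Integrable (fun t => Kk g a t * α t + D * α t) μI := hKaInt.add hDInt
    rw [heq, integral_sub h4 hKbInt, integral_add hKaInt hDInt]
  have hmid : (∫ t in I, D * α t) = 0 := by
    rw [MeasureTheory.integral_const_mul, hα0, mul_zero]
  have hshifta : IntegrableOn (fun s => g (s + a)) I volume :=
    (shiftIcc g hgint ha).mono_set Ioo_subset_Icc_self
  have hshiftb : IntegrableOn (fun s => g (s + b)) I volume :=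
    (shiftIcc g hgint (le_trans ha hab)).mono_set Ioo_subset_Icc_self
  rw [← hRHS, ← hswap, hLHS, hsplit, hmid,
    ← PsiK g α hshifta hαint, ← PsiK g α hshiftb hαint]
  ring

lemma AmulInt (g α : ℝ → ℝ) (hgint : ∀ a b : ℝ, 1 ≤ a → IntegrableOn g (Icc a b) volume)
    (hαint : IntegrableOn α (Ioo (-1:ℝ) 1) volume) {R : ℝ} (hR : 2 ≤ R) :
    Integrable (fun s => Aa α s * g (s + R)) (volume.restrict (Ioo (-1:ℝ) 1)) := by
  apply (shiftIoo g hgint hR).bdd_mul (c := ∫ t in Ioo (-1:ℝ) 1, ‖α t‖)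
  · exact ((Acont α hαint).mono Ioo_subset_Icc_self).aestronglyMeasurable measurableSet_Ioo
  · exact (ae_restrict_mem measurableSet_Ioo).mono fun s hs =>
      Abound α hαint (Ioo_subset_Icc_self hs)

lemma Ψnonneg (g α : ℝ → ℝ) (hg0 : ∀ x, 0 ≤ g x)
    (hαpos : ∀ σ ∈ Ioo (-1:ℝ) 1, 0 < Aa α σ) (R : ℝ) : 0 ≤ Ψf g α R :=
  setIntegral_nonneg measurableSet_Ioo fun s hs =>
    mul_nonneg (hαpos s hs).le (hg0 _)

lemma Ψsmall (g α : ℝ → ℝ) (hg0 : ∀ x, 0 ≤ g x)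
    (hgint : ∀ a b : ℝ, 1 ≤ a → IntegrableOn g (Icc a b) volume)
    (hgsm : ∀ ε > 0, ∃ M : ℝ, ∀ᵐ x : ℝ, M ≤ x → g x ≤ ε)
    (hαint : IntegrableOn α (Ioo (-1:ℝ) 1) volume)
    {ε : ℝ} (hε : 0 < ε) (L : ℝ) :
    ∃ S, L ≤ S ∧ 2 ≤ S ∧ Ψf g α S ≤ ε := by
  set C : ℝ := ∫ t in Ioo (-1:ℝ) 1, ‖α t‖ with hC
  have hC0 : 0 ≤ C := setIntegral_nonneg measurableSet_Ioo fun t _ => norm_nonneg _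
  set ε' : ℝ := ε / (2 * (C + 1)) with hε'def
  have hε' : 0 < ε' := by positivity
  obtain ⟨M, hM⟩ := hgsm ε' hε'
  refine ⟨max L (max 2 (M + 1)), le_max_left _ _, (le_max_left _ _).trans (le_max_right _ _), ?_⟩
  set S := max L (max 2 (M + 1)) with hSdef
  have hS2 : 2 ≤ S := (le_max_left _ _).trans (le_max_right _ _)
  have hSM : M + 1 ≤ S := (le_max_right _ _).trans (le_max_right _ _)
  have hae : ∀ᵐ s ∂(volume.restrict (Ioo (-1:ℝ) 1)), Aa α s * g (s + S) ≤ (C + 1) * ε' := by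
    filter_upwards [ae_restrict_of_ae (ae_add_right hM S), ae_restrict_mem measurableSet_Ioo]
      with s h1 hs
    have hgb : g (s + S) ≤ ε' := h1 (by linarith [hs.1])
    have h2 : Aa α s ≤ C := by
      have := Abound α hαint (Ioo_subset_Icc_self hs)
      rw [Real.norm_eq_abs] at this
      linarith [le_abs_self (Aa α s)]
    have h3 : 0 ≤ g (s + S) := hg0 _
    have h4 : 0 ≤ Aa α s ∨ Aa α s < 0 := le_or_gt 0 _
    nlinarith
  have hint := AmulInt g α hgint hαint hS2
  have hconst : IntegrableOn (fun _ : ℝ => (C + 1) * ε') (Ioo (-1:ℝ) 1) volume :=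
    integrableOn_const measure_Ioo_lt_top.ne
  have hle : Ψf g α S ≤ ∫ _ in Ioo (-1:ℝ) 1, (C + 1) * ε' :=
    integral_mono_ae hint hconst hae
  rw [setIntegral_const, measureReal_def, Real.volume_Ioo, smul_eq_mul] at hle
  have : (ENNReal.ofReal (1 - (-1:ℝ))).toReal = 2 := by
    rw [ENNReal.toReal_ofReal (by norm_num)]; norm_num
  rw [this] at hle
  have hne : (2 * (C + 1)) ≠ 0 := by positivity
  calc Ψf g α S ≤ 2 * ((C + 1) * ε') := hle
    _ = ε := by rw [hε'def]; field_simp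


lemma Ψpos (g α : ℝ → ℝ)
    (hgint : ∀ a b : ℝ, 1 ≤ a → IntegrableOn g (Icc a b) volume)
    (hαint : IntegrableOn α (Ioo (-1:ℝ) 1) volume)
    (hαpos : ∀ σ ∈ Ioo (-1:ℝ) 1, 0 < Aa α σ)
    (hg0 : ∀ x, 0 ≤ g x)
    {a : ℝ} (ha : 2 ≤ a) {J : Set ℝ} (hJv : 0 < volume J)
    (hJsub : J ⊆ Ioc (a - 1/2) (a + 1/2)) (hJg : ∀ x ∈ J, 0 < g x) :
    0 < Ψf g α a := by
  set f : ℝ → ℝ := fun s => Aa α s * g (s + a) with hfdef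
  have hnn : 0 ≤ᵐ[volume.restrict (Ioo (-1:ℝ) 1)] f :=
    (ae_restrict_mem measurableSet_Ioo).mono fun s hs =>
      mul_nonneg (hαpos s hs).le (hg0 _)
  have hfi := AmulInt g α hgint hαint ha
  rw [Ψf, ← hfdef]
  rw [setIntegral_pos_iff_support_of_nonneg_ae hnn hfi]
  have hsub : (fun s => s + a) ⁻¹' J ⊆ Function.support f ∩ Ioo (-1:ℝ) 1 := by
    intro s hs
    have hj := hJsub hs
    have hsI : s ∈ Ioo (-1:ℝ) 1 := by
      constructor
      · have := hj.1; simp only [mem_Ioc] at hj; linarith [hj.1]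
      · have := hj.2; simp only [mem_Ioc] at hj; linarith [hj.2]
    refine ⟨?_, hsI⟩
    have h1 : 0 < Aa α s := hαpos s hsI
    have h2 : 0 < g (s + a) := hJg _ hs
    exact ne_of_gt (mul_pos h1 h2)
  calc (0:ENNReal) < volume J := hJv
    _ = volume ((fun s => s + a) ⁻¹' J) := (measure_preimage_add_right volume a J).symm
    _ ≤ volume (Function.support f ∩ Ioo (-1:ℝ) 1) := measure_mono hsub

lemma core (g α : ℝ → ℝ) (hgm : Measurable g) (hαm : Measurable α)
    (hg0 : ∀ x, 0 ≤ g x)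
    (hgint : ∀ a b : ℝ, 1 ≤ a → IntegrableOn g (Icc a b) volume)
    (hgsm : ∀ ε > 0, ∃ M : ℝ, ∀ᵐ x : ℝ, M ≤ x → g x ≤ ε)
    (hαint : IntegrableOn α (Ioo (-1:ℝ) 1) volume)
    (hα0 : (∫ t in Ioo (-1:ℝ) 1, α t) = 0)
    (hαpos : ∀ σ ∈ Ioo (-1:ℝ) 1, 0 < Aa α σ)
    (R₁ : ℝ) (hR₁ : 2 ≤ R₁) :
    (∃ R, R₁ ≤ R ∧ 0 ≤ Φf g α R) ∧
      ((∀ T : ℝ, 0 < volume {t : ℝ | T < t ∧ 0 < g t}) →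
        ∃ R, R₁ ≤ R ∧ 0 < Φf g α R) := by
  constructor
  · by_contra hcon
    push_neg at hcon
    have hneg : ∀ R, R₁ ≤ R → Φf g α R < 0 := fun R hR => by
      have := hcon R hR; linarith
    have mono_strict : ∀ a b : ℝ, R₁ ≤ a → a < b → Ψf g α a < Ψf g α b := by
      intro a b haR hab
      obtain ⟨hint, heq⟩ := PhiPsi g α hgm hαm hg0 hgint hαint hα0
        (le_trans hR₁ haR) hab.le
      have hnn : 0 ≤ᵐ[volume.restrict (Ioo a b)] (fun R => -Φf g α R) :=
        (ae_restrict_mem measurableSet_Ioo).mono fun R hR =>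
          neg_nonneg.2 (hneg R (le_trans haR hR.1.le)).le
      have hsupp : Ioo a b ⊆ Function.support (fun R => -Φf g α R) := fun R hR =>
        ne_of_gt (neg_pos.2 (hneg R (le_trans haR hR.1.le)))
      have hpos : 0 < ∫ R in Ioo a b, -Φf g α R := by
        rw [setIntegral_pos_iff_support_of_nonneg_ae hnn hint.neg]
        calc (0:ENNReal) < volume (Ioo a b) := by
              rw [Real.volume_Ioo]; exact ENNReal.ofReal_pos.2 (by linarith)
          _ ≤ volume (Function.support (fun R => -Φf g α R) ∩ Ioo a b) :=
              measure_mono (fun R hR => ⟨hsupp hR, hR⟩)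
      rw [integral_neg, heq] at hpos
      linarith
    have h0 : 0 ≤ Ψf g α R₁ := Ψnonneg g α hg0 hαpos R₁
    have hv : 0 < Ψf g α (R₁ + 1) :=
      lt_of_le_of_lt h0 (mono_strict R₁ (R₁ + 1) le_rfl (by linarith))
    obtain ⟨S, hSL, hS2, hSe⟩ := Ψsmall g α hg0 hgint hgsm hαint (half_pos hv) (R₁ + 2)
    have : Ψf g α (R₁ + 1) < Ψf g α S :=
      mono_strict (R₁ + 1) S (by linarith) (by linarith)
    linarith
  · intro hT
    by_contra hcon
    push_neg at hcon
    have hneg : ∀ R, R₁ ≤ R → Φf g α R ≤ 0 := fun R hR => (hcon R hR)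
    have mono_weak : ∀ a b : ℝ, R₁ ≤ a → a ≤ b → Ψf g α a ≤ Ψf g α b := by
      intro a b haR hab
      obtain ⟨hint, heq⟩ := PhiPsi g α hgm hαm hg0 hgint hαint hα0
        (le_trans hR₁ haR) hab
      have : (∫ R in Ioo a b, Φf g α R) ≤ 0 :=
        setIntegral_nonpos measurableSet_Ioo fun R hR =>
          hneg R (le_trans haR hR.1.le)
      linarith [heq ▸ this]
    -- find a point of positivity
    set S₀ : Set ℝ := {t : ℝ | R₁ < t ∧ 0 < g t} with hS₀def
    have hS₀v : 0 < volume S₀ := hT R₁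
    have hcover : S₀ ⊆ ⋃ n : ℕ, S₀ ∩ Ioc (R₁ + n) (R₁ + n + 1) := by
      intro t ht
      have h1 : 0 < t - R₁ := by have := ht.1; simpa [hS₀def] using sub_pos.2 ht.1
      set m := ⌈t - R₁⌉₊ with hm
      have hm1 : 1 ≤ m := Nat.one_le_ceil_iff.2 h1
      refine mem_iUnion.2 ⟨m - 1, ht, ?_, ?_⟩
      · have hcast : ((m - 1 : ℕ) : ℝ) = (m : ℝ) - 1 := by
          rw [Nat.cast_sub hm1, Nat.cast_one]
        rw [hcast]
        have := Nat.ceil_lt_add_one h1.le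
        have hml : (m : ℝ) < t - R₁ + 1 := this
        linarith
      · have hcast : ((m - 1 : ℕ) : ℝ) = (m : ℝ) - 1 := by
          rw [Nat.cast_sub hm1, Nat.cast_one]
        rw [hcast]
        have := Nat.le_ceil (t - R₁)
        linarith [this]
    obtain ⟨n, hn⟩ : ∃ n : ℕ, 0 < volume (S₀ ∩ Ioc (R₁ + n) (R₁ + n + 1)) := by
      by_contra hc
      push_neg at hc
      have hz : ∀ n : ℕ, volume (S₀ ∩ Ioc (R₁ + n) (R₁ + n + 1)) = 0 := fun n =>
        le_antisymm (hc n) zero_le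
      have : volume S₀ = 0 :=
        le_antisymm (le_trans (measure_mono hcover) (measure_iUnion_null hz).le) zero_le
      rw [this] at hS₀v
      exact lt_irrefl _ hS₀v
    have hn0 : (0:ℝ) ≤ (n:ℝ) := Nat.cast_nonneg n
    set a : ℝ := R₁ + n + 1/2 with hadef
    have ha2 : 2 ≤ a := by rw [hadef]; linarith
    have haR : R₁ ≤ a := by rw [hadef]; linarith
    have hpos : 0 < Ψf g α a := by
      apply Ψpos g α hgint hαint hαpos hg0 ha2 hn
      · intro x hx
        have := hx.2
        simp only [mem_Ioc] at this
        constructor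
        · have : a - 1/2 = R₁ + n := by ring
          rw [this]; exact hx.2.1
        · have : a + 1/2 = R₁ + n + 1 := by ring
          rw [this]; exact hx.2.2
      · exact fun x hx => hx.1.2
    obtain ⟨S, hSL, hS2, hSe⟩ := Ψsmall g α hg0 hgint hgsm hαint (half_pos hpos) a
    have := mono_weak a S haR hSL
    linarith


end Lem34
/-- Lemma 3.4: given a nonnegative weight `g` vanishing at infinity and a function `α` on
`(-1,1)` with zero mean and positive partial integrals, there exist arbitrarily large `R`
with `∫_{-1}^1 α(t) g(t+R) dt ≥ 0`, with strict inequality if `g` is not eventually zero. -/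
theorem exists_large_R_integral_nonneg
    (g : ℝ → ℝ) (α : ℝ → ℝ)
    (hg0 : ∀ t ∈ Set.Ioi (0 : ℝ), 0 ≤ g t)
    (hgloc : LocallyIntegrableOn g (Set.Ioi (0 : ℝ)) volume)
    (hgtend : Tendsto g atTop (𝓝 0))
    (hαint : IntegrableOn α (Set.Ioo (-1 : ℝ) 1) volume)
    (hαzero : (∫ t in (-1 : ℝ)..1, α t) = 0)
    (hαpos : ∀ σ ∈ Set.Ioo (-1 : ℝ) 1, 0 < ∫ t in (-1 : ℝ)..σ, α t)
    (R₀ : ℝ) (hR₀ : 0 < R₀) :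
    (∃ R ≥ R₀, 0 ≤ ∫ t in (-1 : ℝ)..1, α t * g (t + R)) ∧
    ((∀ T : ℝ, 0 < volume {t : ℝ | T < t ∧ 0 < g t}) →
      ∃ R ≥ R₀, 0 < ∫ t in (-1 : ℝ)..1, α t * g (t + R)) := by
  classical
  set I : Set ℝ := Set.Ioo (-1:ℝ) 1 with hIdef
  have hgasm : AEStronglyMeasurable g (volume.restrict (Set.Ioi (0:ℝ))) :=
    hgloc.aestronglyMeasurable
  set g₁ := hgasm.mk g with hg₁def
  have hg₁m : StronglyMeasurable g₁ := hgasm.stronglyMeasurable_mk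
  set g' : ℝ → ℝ := fun x => if 0 < x then max (g₁ x) 0 else 0 with hg'def
  have hg'm : Measurable g' :=
    Measurable.ite measurableSet_Ioi (hg₁m.measurable.max measurable_const) measurable_const
  have hgE : ∀ᵐ x : ℝ, x ∈ Set.Ioi (0:ℝ) → g' x = g x := by
    have h1 : ∀ᵐ x ∂(volume.restrict (Set.Ioi (0:ℝ))), g x = g₁ x := hgasm.ae_eq_mk
    have h2 := (ae_restrict_iff' measurableSet_Ioi).1 h1
    filter_upwards [h2] with x hx hx0
    have h3 := hx hx0
    simp only [hg'def, if_pos hx0, ← h3, max_eq_left (hg0 x hx0)]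
    exact if_pos hx0
  have hg'0 : ∀ x, 0 ≤ g' x := fun x => by
    simp only [hg'def]; split
    · exact le_max_right _ _
    · exact le_refl 0
  have hg'int : ∀ a b : ℝ, 1 ≤ a → IntegrableOn g' (Set.Icc a b) volume := by
    intro a b ha
    have hsub : Set.Icc a b ⊆ Set.Ioi (0:ℝ) := fun x hx =>
      lt_of_lt_of_le (lt_of_lt_of_le zero_lt_one ha) hx.1
    have hint : IntegrableOn g (Set.Icc a b) volume :=
      hgloc.integrableOn_compact_subset hsub isCompact_Icc
    apply hint.congr
    filter_upwards [ae_restrict_of_ae hgE, ae_restrict_mem measurableSet_Icc] with x h1 h2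
    exact (h1 (hsub h2)).symm
  have hg'sm : ∀ ε > 0, ∃ M : ℝ, ∀ᵐ x : ℝ, M ≤ x → g' x ≤ ε := by
    intro ε hε
    have hev : ∀ᶠ x in atTop, g x < ε := hgtend.eventually_lt_const hε
    obtain ⟨M, hM⟩ := eventually_atTop.1 hev
    refine ⟨max M 1, ?_⟩
    filter_upwards [hgE] with x hx hMx
    have hx0 : x ∈ Set.Ioi (0:ℝ) :=
      lt_of_lt_of_le zero_lt_one (le_trans (le_max_right M 1) hMx)
    rw [hx hx0]
    exact (hM x (le_trans (le_max_left M 1) hMx)).le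
  -- measurable version of α
  have hαasm := hαint.aestronglyMeasurable
  set α₁ := hαasm.mk α with hα₁def
  set α' : ℝ → ℝ := I.indicator α₁ with hα'def
  have hα'm : Measurable α' :=
    (hαasm.stronglyMeasurable_mk.measurable).indicator measurableSet_Ioo
  have hαE : α' =ᵐ[volume.restrict I] α := by
    filter_upwards [hαasm.ae_eq_mk, ae_restrict_mem measurableSet_Ioo] with x h1 h2
    rw [hα'def, Set.indicator_of_mem h2]
    exact h1.symm
  have hα'int : IntegrableOn α' I volume := hαint.congr hαE.symm
  have hIoo : ∀ (f : ℝ → ℝ), (∫ t in (-1:ℝ)..1, f t) = ∫ t in I, f t := fun f => by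
    rw [intervalIntegral.integral_of_le (by norm_num), integral_Ioc_eq_integral_Ioo]
  have hα'0 : (∫ t in I, α' t) = 0 := by
    rw [integral_congr_ae hαE, ← hIoo α, hαzero]
  have hα'pos : ∀ σ ∈ I, 0 < Lem34.Aa α' σ := by
    intro σ hσ
    have heq : (∫ t in (-1:ℝ)..σ, α' t) = ∫ t in (-1:ℝ)..σ, α t := by
      rw [intervalIntegral.integral_of_le hσ.1.le, intervalIntegral.integral_of_le hσ.1.le,
        integral_Ioc_eq_integral_Ioo, integral_Ioc_eq_integral_Ioo]
      exact integral_congr_ae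
        (ae_restrict_of_ae_restrict_of_subset (Set.Ioo_subset_Ioo le_rfl hσ.2.le) hαE)
    rw [Lem34.Aa, heq]
    exact hαpos σ hσ
  have hconv : ∀ R : ℝ, 2 ≤ R →
      (∫ t in (-1:ℝ)..1, α t * g (t + R)) = Lem34.Φf g' α' R := by
    intro R hR
    rw [hIoo]
    apply integral_congr_ae
    have htr : ∀ᵐ t : ℝ, (t + R) ∈ Set.Ioi (0:ℝ) → g' (t + R) = g (t + R) :=
      Lem34.ae_add_right hgE R
    filter_upwards [ae_restrict_of_ae htr, ae_restrict_mem measurableSet_Ioo, hαE]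
      with t h1 h2 h3
    have h4 : g' (t + R) = g (t + R) := h1 (by simp only [Set.mem_Ioi]; linarith [h2.1])
    rw [← h4, ← h3, mul_comm]
  set R₁ := max 2 R₀ with hR₁def
  obtain ⟨c1, c2⟩ := Lem34.core g' α' hg'm hα'm hg'0 hg'int hg'sm hα'int hα'0 hα'pos
    R₁ (le_max_left _ _)
  constructor
  · obtain ⟨R, hRge, hR0⟩ := c1
    refine ⟨R, le_trans (le_max_right _ _) hRge, ?_⟩
    rw [hconv R (le_trans (le_max_left _ _) hRge)]
    exact hR0
  · intro hne
    have hne' : ∀ T : ℝ, 0 < volume {t : ℝ | T < t ∧ 0 < g' t} := by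
      intro T
      have hEnull : volume {x : ℝ | ¬ (x ∈ Set.Ioi (0:ℝ) → g' x = g x)} = 0 := by
        exact ae_iff.1 hgE
      have hsub : {t : ℝ | max T 0 < t ∧ 0 < g t} ⊆
          {t : ℝ | T < t ∧ 0 < g' t} ∪ {x : ℝ | ¬ (x ∈ Set.Ioi (0:ℝ) → g' x = g x)} := by
        intro t ht
        by_cases hE : t ∈ {x : ℝ | ¬ (x ∈ Set.Ioi (0:ℝ) → g' x = g x)}
        · exact Or.inr hE
        · left
          have hP : t ∈ Set.Ioi (0:ℝ) → g' t = g t := not_not.1 hE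
          have h0t : t ∈ Set.Ioi (0:ℝ) := lt_of_le_of_lt (le_max_right T 0) ht.1
          exact ⟨lt_of_le_of_lt (le_max_left T 0) ht.1, by rw [hP h0t]; exact ht.2⟩
      calc (0:ENNReal) < volume {t : ℝ | max T 0 < t ∧ 0 < g t} := hne (max T 0)
        _ ≤ volume ({t : ℝ | T < t ∧ 0 < g' t} ∪
              {x : ℝ | ¬ (x ∈ Set.Ioi (0:ℝ) → g' x = g x)}) := measure_mono hsub
        _ ≤ volume {t : ℝ | T < t ∧ 0 < g' t} +
              volume {x : ℝ | ¬ (x ∈ Set.Ioi (0:ℝ) → g' x = g x)} := measure_union_le _ _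
        _ = volume {t : ℝ | T < t ∧ 0 < g' t} := by rw [hEnull, add_zero]
    obtain ⟨R, hRge, hR0⟩ := c2 hne'
    refine ⟨R, le_trans (le_max_right _ _) hRge, ?_⟩
    rw [hconv R (le_trans (le_max_left _ _) hRge)]
    exact hR0
end

section
/- Let g : (0,∞) → [0,∞) be locally integrable with g(t) → 0 as t → ∞, and let β : (−1,1) → ℝ be integrable. Define α(t) = ∫_{−1}^{t} β(σ) dσ for t ∈ (−1,1), and assume: α is integrable on (−1,1), ∫_{−1}^{1} α(t) dt = 0, ∫_{−1}^{σ} α(t) dt > 0 for every σ ∈ (−1,1), and ∫_{−1}^{1} β(σ) dσ = 0. Then for every R₀ > 0 there exists R ≥ R₀ such that ∫_{−1}^{1} β(t) g(t+R) dt ≥ 0; moreover, if g is not eventually zero, then R can be chosen so that the inequality is strict. -/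
open MeasureTheory Filter Set Topology

namespace Lem35

lemma integral_Ioc_comp_add (f : ℝ → ℝ) (a b c : ℝ) :
    (∫ t in Ioc a b, f (t + c)) = ∫ u in Ioc (a + c) (b + c), f u := by
  rcases le_or_gt a b with h | h
  · rw [← intervalIntegral.integral_of_le h,
      ← intervalIntegral.integral_of_le (by linarith : a + c ≤ b + c)]
    exact intervalIntegral.integral_comp_add_right f c
  · rw [Ioc_eq_empty (not_lt.mpr h.le), Ioc_eq_empty (not_lt.mpr (by linarith : b + c ≤ a + c))]
    simp

lemma ae_comp_add (c : ℝ) {P : ℝ → Prop} (h : ∀ᵐ t : ℝ, P t) : ∀ᵐ u : ℝ, P (u + c) := by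
  rw [ae_iff] at h ⊢
  exact (measurePreserving_add_right volume c).quasiMeasurePreserving.preimage_null h

lemma integrableOn_comp_add (G : ℝ → ℝ) {a b : ℝ} (c : ℝ) (hab : a ≤ b)
    (h : IntegrableOn G (Ioc (a + c) (b + c)) volume) :
    IntegrableOn (fun R => G (R + c)) (Ioc a b) volume := by
  have h1 := (intervalIntegrable_iff_integrableOn_Ioc_of_le (by linarith : a + c ≤ b + c)).2 h
  have h2 := h1.comp_add_right c
  simp only [add_sub_cancel_right] at h2
  exact (intervalIntegrable_iff_integrableOn_Ioc_of_le hab).1 h2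

variable {G φ : ℝ → ℝ}

lemma prodInt (hG : Measurable G) (hG0 : ∀ u, 0 ≤ G u)
    (hGint : ∀ x : ℝ, IntegrableOn G (Ioc 1 x) volume)
    (hφm : Measurable φ) (hφ : IntegrableOn φ (Ioc (-1 : ℝ) 1) volume)
    {a : ℝ} (b : ℝ) (ha : 2 ≤ a) :
    Integrable (fun p : ℝ × ℝ => φ p.1 * G (p.1 + p.2))
      ((volume.restrict (Ioc (-1 : ℝ) 1)).prod (volume.restrict (Ioc a b))) := by
  have hmeas : AEStronglyMeasurable (fun p : ℝ × ℝ => φ p.1 * G (p.1 + p.2))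
      ((volume.restrict (Ioc (-1 : ℝ) 1)).prod (volume.restrict (Ioc a b))) :=
    ((hφm.comp measurable_fst).mul
      (hG.comp (measurable_fst.add measurable_snd))).aestronglyMeasurable
  rcases le_or_gt a b with hab | hab
  · refine (integrable_prod_iff hmeas).2 ⟨?_, ?_⟩
    · filter_upwards [ae_restrict_mem measurableSet_Ioc] with t ht
      have h1 : IntegrableOn G (Ioc (a + t) (b + t)) volume :=
        (hGint (b + t)).mono_set (fun u hu => ⟨by linarith [ht.1, hu.1], hu.2⟩)
      have h2 := (integrableOn_comp_add G t hab h1).const_mul (φ t)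
      refine h2.congr ?_
      filter_upwards with R
      simp [add_comm]
    · set C := ∫ u in Ioc (1:ℝ) (b + 1), G u with hC
      refine Integrable.mono' (hφ.norm.mul_const C) hmeas.norm.integral_prod_right' ?_
      filter_upwards [ae_restrict_mem measurableSet_Ioc] with t ht
      have hval : (∫ R in Ioc a b, ‖φ t * G (t + R)‖) = ‖φ t‖ * ∫ R in Ioc a b, G (t + R) := by
        simp_rw [norm_mul, Real.norm_of_nonneg (hG0 _)]
        exact integral_const_mul _ _
      have htrans : (∫ R in Ioc a b, G (t + R)) = ∫ u in Ioc (a + t) (b + t), G u := by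
        simp_rw [add_comm t]
        exact integral_Ioc_comp_add G a b t
      have hle : (∫ u in Ioc (a + t) (b + t), G u) ≤ C := by
        refine setIntegral_mono_set (hGint (b + 1)) ?_ ?_
        · filter_upwards with u using hG0 u
        · refine HasSubset.Subset.eventuallyLE (fun u hu => ?_)
          exact ⟨by linarith [ht.1, hu.1], by linarith [ht.2, hu.2]⟩
      have hnn : 0 ≤ ∫ R in Ioc a b, ‖φ t * G (t + R)‖ :=
        integral_nonneg fun _ => norm_nonneg _
      rw [Real.norm_of_nonneg hnn, hval, htrans]
      exact mul_le_mul_of_nonneg_left hle (norm_nonneg _)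
  · rw [show Ioc a b = (∅ : Set ℝ) from Ioc_eq_empty (not_lt.mpr hab.le),
      Measure.restrict_empty, Measure.prod_zero]
    exact integrable_zero_measure

lemma Fint (hG : Measurable G) (hG0 : ∀ u, 0 ≤ G u)
    (hGint : ∀ x : ℝ, IntegrableOn G (Ioc 1 x) volume)
    (hφm : Measurable φ) (hφ : IntegrableOn φ (Ioc (-1 : ℝ) 1) volume)
    {a : ℝ} (b : ℝ) (ha : 2 ≤ a) :
    IntegrableOn (fun R => ∫ t in Ioc (-1 : ℝ) 1, φ t * G (t + R))
      (Ioc a b) volume :=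
  (prodInt hG hG0 hGint hφm hφ b ha).integral_prod_right



variable {Φ : ℝ → ℝ}

lemma IBP (hG : Measurable G) (hG0 : ∀ u, 0 ≤ G u)
    (hGint : ∀ x : ℝ, IntegrableOn G (Ioc 1 x) volume)
    (hφm : Measurable φ) (hφ : IntegrableOn φ (Ioc (-1 : ℝ) 1) volume)
    (hφ0 : (∫ t in Ioc (-1 : ℝ) 1, φ t) = 0)
    (hΦ : ∀ᵐ t : ℝ, t ∈ Ioo (-1 : ℝ) 1 → Φ t = ∫ σ in Ioc (-1 : ℝ) t, φ σ)
    {S : ℝ} (hS : 2 ≤ S) :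
    (∫ t in Ioc (-1 : ℝ) 1, φ t * ∫ u in Ioc 1 (t + S), G u)
      = - ∫ t in Ioc (-1 : ℝ) 1, Φ t * G (t + S) := by
  set C1 : ℝ := ∫ u in Ioc (1 : ℝ) (S - 1), G u with hC1
  -- decomposition of the inner primitive
  have hdecomp : ∀ t ∈ Ioc (-1 : ℝ) 1,
      (∫ u in Ioc (1 : ℝ) (t + S), G u) = C1 + ∫ u in Ioc (S - 1) (t + S), G u := by
    intro t ht
    rw [hC1, ← setIntegral_union (Ioc_disjoint_Ioc_of_le le_rfl) measurableSet_Ioc (hGint (S - 1))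
      ((hGint (t + S)).mono_set (fun u hu => ⟨by linarith [hu.1], hu.2⟩)),
      Ioc_union_Ioc_eq_Ioc (by linarith) (by linarith [ht.1])]
  -- monotone remainder
  have hmono : Monotone (fun t : ℝ => ∫ u in Ioc (S - 1) (t + S), G u) := by
    intro t₁ t₂ h
    refine setIntegral_mono_set ((hGint (t₂ + S)).mono_set
      (fun u hu => ⟨by linarith [hu.1], hu.2⟩)) ?_ ?_
    · filter_upwards with u using hG0 u
    · exact HasSubset.Subset.eventuallyLE (Ioc_subset_Ioc_right (by linarith))
  have hψint : Integrable (fun t => φ t * ∫ u in Ioc (S - 1) (t + S), G u)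
      (volume.restrict (Ioc (-1 : ℝ) 1)) := by
    set C2 : ℝ := ∫ u in Ioc (S - 1) (1 + S), G u with hC2
    refine Integrable.mono' (hφ.norm.mul_const C2)
      ((hφm.mul hmono.measurable).aestronglyMeasurable) ?_
    filter_upwards [ae_restrict_mem measurableSet_Ioc] with t ht
    rw [norm_mul]
    refine mul_le_mul_of_nonneg_left ?_ (norm_nonneg _)
    have h1 : 0 ≤ ∫ u in Ioc (S - 1) (t + S), G u :=
      setIntegral_nonneg measurableSet_Ioc fun u _ => hG0 u
    rw [Real.norm_of_nonneg h1]
    exact hmono ht.2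
  have hsplit : (∫ t in Ioc (-1 : ℝ) 1, φ t * ∫ u in Ioc 1 (t + S), G u)
      = (∫ t in Ioc (-1 : ℝ) 1, φ t * C1)
        + ∫ t in Ioc (-1 : ℝ) 1, φ t * ∫ u in Ioc (S - 1) (t + S), G u := by
    rw [← integral_add (hφ.mul_const C1) hψint]
    refine setIntegral_congr_fun measurableSet_Ioc (fun t ht => ?_)
    rw [hdecomp t ht, mul_add]
  have hzero : (∫ t in Ioc (-1 : ℝ) 1, φ t * C1) = 0 := by
    rw [integral_mul_const, hφ0, zero_mul]
  -- indicator form of the remainder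
  have hind : ∀ t ∈ Ioc (-1 : ℝ) 1,
      (∫ u in Ioc (S - 1) (t + S), G u)
        = ∫ u in Ioc (S - 1) (S + 1), (Iic (t + S)).indicator G u := by
    intro t ht
    rw [setIntegral_indicator measurableSet_Iic, Ioc_inter_Iic,
      inf_eq_right.mpr (by linarith [ht.2] : t + S ≤ S + 1)]
  -- Fubini
  set f : ℝ → ℝ → ℝ := fun t u => φ t * (Iic (t + S)).indicator G u with hf
  have hfuncurry : Function.uncurry f = fun p : ℝ × ℝ =>
      if p.2 ≤ p.1 + S then φ p.1 * G p.2 else 0 := by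
    funext p
    simp only [hf, Function.uncurry, indicator_apply, mem_Iic, mul_ite, mul_zero]
  have hfmeas : AEStronglyMeasurable (Function.uncurry f)
      ((volume.restrict (Ioc (-1 : ℝ) 1)).prod (volume.restrict (Ioc (S - 1) (S + 1)))) := by
    rw [hfuncurry]
    refine Measurable.aestronglyMeasurable ?_
    exact Measurable.ite (measurableSet_le measurable_snd (measurable_fst.add_const S))
      ((hφm.comp measurable_fst).mul (hG.comp measurable_snd)) measurable_const
  have hfint : Integrable (Function.uncurry f)
      ((volume.restrict (Ioc (-1 : ℝ) 1)).prod (volume.restrict (Ioc (S - 1) (S + 1)))) := by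
    refine Integrable.mono' (hφ.norm.mul_prod ((hGint (S + 1)).mono_set
      (fun u hu => ⟨by linarith [hu.1], hu.2⟩))) hfmeas ?_
    filter_upwards with p
    rw [hfuncurry]
    by_cases h : p.2 ≤ p.1 + S
    · simp only [h, if_true, norm_mul]
      exact mul_le_mul_of_nonneg_left (le_of_eq (Real.norm_of_nonneg (hG0 _))) (norm_nonneg _)
    · simp only [h, if_false, norm_zero]
      exact mul_nonneg (norm_nonneg _) (hG0 _)
  have hswap := integral_integral_swap hfint
  -- identify the inner integral after swapping
  have hone : ∀ᵐ u : ℝ, u ≠ S + 1 := by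
    have : (volume : Measure ℝ) {S + 1} = 0 := measure_singleton _
    rw [ae_iff]
    simpa using this
  have hΦS : ∀ᵐ u : ℝ, (u + -S) ∈ Ioo (-1 : ℝ) 1 →
      Φ (u + -S) = ∫ σ in Ioc (-1 : ℝ) (u + -S), φ σ := ae_comp_add (-S) hΦ
  have hinner : ∀ᵐ u ∂(volume.restrict (Ioc (S - 1) (S + 1))),
      (∫ t in Ioc (-1 : ℝ) 1, f t u) = -(Φ (u - S) * G u) := by
    filter_upwards [ae_restrict_mem measurableSet_Ioc, ae_restrict_of_ae hone,
      ae_restrict_of_ae hΦS] with u hu hune hΦu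
    have huS : u - S ∈ Ioo (-1 : ℝ) 1 := by
      constructor
      · linarith [hu.1]
      · rcases lt_or_eq_of_le hu.2 with h | h
        · linarith
        · exact absurd h hune
    have h1 : ∀ t : ℝ, f t u = (Ici (u - S)).indicator φ t * G u := by
      intro t
      simp only [hf, indicator_apply, mem_Iic, mem_Ici, ite_mul, zero_mul, mul_ite, mul_zero,
        sub_le_iff_le_add]
    have h2 : (∫ t in Ioc (-1 : ℝ) 1, f t u)
        = (∫ t in Ioc (-1 : ℝ) 1, (Ici (u - S)).indicator φ t) * G u := by
      simp_rw [h1]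
      exact integral_mul_const _ _
    rw [h2, setIntegral_indicator measurableSet_Ici]
    have hset : Ioc (-1 : ℝ) 1 ∩ Ici (u - S) = Icc (u - S) 1 := by
      ext x
      simp only [mem_inter_iff, mem_Ioc, mem_Ici, mem_Icc]
      constructor
      · rintro ⟨⟨_, hx2⟩, hx3⟩; exact ⟨hx3, hx2⟩
      · rintro ⟨hx1, hx2⟩; exact ⟨⟨by linarith [huS.1], hx2⟩, hx1⟩
    rw [hset, ← Measure.restrict_congr_set Ioc_ae_eq_Icc]
    have hadd : (∫ σ in Ioc (-1 : ℝ) (u - S), φ σ) + (∫ σ in Ioc (u - S) 1, φ σ)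
        = ∫ σ in Ioc (-1 : ℝ) 1, φ σ := by
      rw [← setIntegral_union (Ioc_disjoint_Ioc_of_le le_rfl) measurableSet_Ioc
        (hφ.mono_set (Ioc_subset_Ioc_right huS.2.le))
        (hφ.mono_set (Ioc_subset_Ioc_left huS.1.le)),
        Ioc_union_Ioc_eq_Ioc huS.1.le huS.2.le]
    have hΦval : Φ (u - S) = ∫ σ in Ioc (-1 : ℝ) (u - S), φ σ := by
      have := hΦu (by simpa [sub_eq_add_neg] using huS)
      simpa [sub_eq_add_neg] using this
    rw [hφ0] at hadd
    rw [hΦval]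
    have hB : (∫ σ in Ioc (u - S) 1, φ σ) = -(∫ σ in Ioc (-1 : ℝ) (u - S), φ σ) := by linarith
    rw [hB]; ring
  have hJ : (∫ t in Ioc (-1 : ℝ) 1, φ t * ∫ u in Ioc (S - 1) (t + S), G u)
      = ∫ t in Ioc (-1 : ℝ) 1, ∫ u in Ioc (S - 1) (S + 1), f t u := by
    refine setIntegral_congr_fun measurableSet_Ioc (fun t ht => ?_)
    rw [hind t ht]
    exact (integral_const_mul _ _).symm
  have htrans : (∫ t in Ioc (-1 : ℝ) 1, Φ t * G (t + S))
      = ∫ u in Ioc (S - 1) (S + 1), Φ (u - S) * G u := by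
    have h := integral_Ioc_comp_add (fun u => Φ (u - S) * G u) (-1) 1 S
    simp only [add_sub_cancel_right] at h
    rw [show (-1 : ℝ) + S = S - 1 by ring, show (1 : ℝ) + S = S + 1 by ring] at h
    exact h
  rw [hsplit, hzero, zero_add, hJ, hswap, integral_congr_ae hinner, integral_neg, htrans]



lemma φIG_int (hG0 : ∀ u, 0 ≤ G u)
    (hGint : ∀ x : ℝ, IntegrableOn G (Ioc 1 x) volume)
    (hφm : Measurable φ) (hφ : IntegrableOn φ (Ioc (-1 : ℝ) 1) volume) (S : ℝ) :
    Integrable (fun t => φ t * ∫ u in Ioc (1 : ℝ) (t + S), G u)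
      (volume.restrict (Ioc (-1 : ℝ) 1)) := by
  have hmono : Monotone (fun t : ℝ => ∫ u in Ioc (1 : ℝ) (t + S), G u) := by
    intro t₁ t₂ h
    refine setIntegral_mono_set (hGint (t₂ + S)) ?_ ?_
    · filter_upwards with u using hG0 u
    · exact HasSubset.Subset.eventuallyLE (Ioc_subset_Ioc_right (by linarith))
  refine Integrable.mono' (hφ.norm.mul_const (∫ u in Ioc (1 : ℝ) (1 + S), G u))
    ((hφm.mul hmono.measurable).aestronglyMeasurable) ?_
  filter_upwards [ae_restrict_mem measurableSet_Ioc] with t ht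
  rw [norm_mul]
  refine mul_le_mul_of_nonneg_left ?_ (norm_nonneg _)
  rw [Real.norm_of_nonneg (setIntegral_nonneg measurableSet_Ioc fun u _ => hG0 u)]
  exact hmono ht.2

lemma step1 (hG : Measurable G) (hG0 : ∀ u, 0 ≤ G u)
    (hGint : ∀ x : ℝ, IntegrableOn G (Ioc 1 x) volume)
    (hφm : Measurable φ) (hφ : IntegrableOn φ (Ioc (-1 : ℝ) 1) volume)
    (hφ0 : (∫ t in Ioc (-1 : ℝ) 1, φ t) = 0)
    (hΦ : ∀ᵐ t : ℝ, t ∈ Ioo (-1 : ℝ) 1 → Φ t = ∫ σ in Ioc (-1 : ℝ) t, φ σ)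
    {a b : ℝ} (ha : 2 ≤ a) (hab : a ≤ b) :
    (∫ R in Ioc a b, ∫ t in Ioc (-1 : ℝ) 1, φ t * G (t + R))
      = (∫ t in Ioc (-1 : ℝ) 1, Φ t * G (t + a)) - ∫ t in Ioc (-1 : ℝ) 1, Φ t * G (t + b) := by
  have hswap := integral_integral_swap (f := fun t R => φ t * G (t + R))
    (prodInt hG hG0 hGint hφm hφ b ha)
  rw [← hswap]
  have hinner : ∀ t ∈ Ioc (-1 : ℝ) 1,
      (∫ R in Ioc a b, φ t * G (t + R))
        = φ t * (∫ u in Ioc (1 : ℝ) (t + b), G u) - φ t * ∫ u in Ioc (1 : ℝ) (t + a), G u := by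
    intro t ht
    rw [integral_const_mul]
    have htr : (∫ R in Ioc a b, G (t + R)) = ∫ u in Ioc (a + t) (b + t), G u := by
      simp_rw [add_comm t]
      exact integral_Ioc_comp_add G a b t
    have h1 : (1 : ℝ) ≤ a + t := by linarith [ht.1]
    have hadd : (∫ u in Ioc (1 : ℝ) (a + t), G u) + (∫ u in Ioc (a + t) (b + t), G u)
        = ∫ u in Ioc (1 : ℝ) (b + t), G u := by
      rw [← setIntegral_union (Ioc_disjoint_Ioc_of_le le_rfl) measurableSet_Ioc (hGint (a + t))
        ((hGint (b + t)).mono_set (fun u hu => ⟨by linarith [hu.1], hu.2⟩)),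
        Ioc_union_Ioc_eq_Ioc h1 (by linarith)]
    rw [show b + t = t + b by ring, show a + t = t + a by ring] at hadd
    rw [htr]
    rw [show a + t = t + a by ring, show b + t = t + b by ring]
    rw [← mul_sub]
    congr 1
    linarith
  rw [setIntegral_congr_fun measurableSet_Ioc hinner,
    integral_sub (φIG_int hG0 hGint hφm hφ b) (φIG_int hG0 hGint hφm hφ a),
    IBP hG hG0 hGint hφm hφ hφ0 hΦ (by linarith : 2 ≤ b),
    IBP hG hG0 hGint hφm hφ hφ0 hΦ ha]
  ring

lemma tendsto_zero (g : ℝ → ℝ) (hgG : ∀ᵐ u : ℝ, u ∈ Ioi (0 : ℝ) → g u = G u)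
    (hgtend : Tendsto g atTop (𝓝 0)) {M : ℝ}
    (hΦb : ∀ᵐ t ∂(volume.restrict (Ioc (-1 : ℝ) 1)), ‖Φ t‖ ≤ M) :
    Tendsto (fun S => ∫ t in Ioc (-1 : ℝ) 1, Φ t * G (t + S)) atTop (𝓝 0) := by
  rw [NormedAddCommGroup.tendsto_nhds_zero]
  intro ε hε
  set δ := ε / (4 * (|M| + 1)) with hδdef
  have hδ : 0 < δ := by positivity
  obtain ⟨T, hT⟩ := eventually_atTop.1 ((NormedAddCommGroup.tendsto_nhds_zero.1 hgtend) δ hδ)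
  filter_upwards [eventually_ge_atTop (max 2 (T + 1))] with S hS
  have hS2 : (2 : ℝ) ≤ S := le_trans (le_max_left _ _) hS
  have hST : T + 1 ≤ S := le_trans (le_max_right _ _) hS
  have hgGS : ∀ᵐ t : ℝ, (t + S) ∈ Ioi (0 : ℝ) → g (t + S) = G (t + S) := ae_comp_add S hgG
  have hb : ∀ᵐ t ∂(volume.restrict (Ioc (-1 : ℝ) 1)),
      ‖Φ t * G (t + S)‖ ≤ (|M| + 1) * δ := by
    filter_upwards [ae_restrict_mem measurableSet_Ioc, ae_restrict_of_ae hgGS, hΦb]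
      with t ht h1t hΦt
    have hpos : (t + S) ∈ Ioi (0 : ℝ) := by
      simp only [mem_Ioi]; linarith [ht.1]
    rw [norm_mul, ← h1t hpos]
    have hgb : ‖g (t + S)‖ ≤ δ := (hT (t + S) (by linarith [ht.1])).le
    have hΦb' : ‖Φ t‖ ≤ |M| + 1 := le_trans hΦt (by linarith [le_abs_self M])
    exact mul_le_mul hΦb' hgb (norm_nonneg _) (by positivity)
  have hfin : volume (Ioc (-1 : ℝ) 1) < ⊤ := by
    rw [Real.volume_Ioc]; exact ENNReal.ofReal_lt_top
  have hbound := norm_setIntegral_le_of_norm_le_const_ae hfin hb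
  have hvol : (volume (Ioc (-1 : ℝ) 1)).toReal = 2 := by
    rw [Real.volume_Ioc]
    norm_num
  rw [measureReal_def, hvol] at hbound
  calc ‖∫ t in Ioc (-1 : ℝ) 1, Φ t * G (t + S)‖ ≤ (|M| + 1) * δ * 2 := hbound
    _ = ε / 2 := by
        rw [hδdef]
        field_simp
        ring
    _ < ε := by linarith

lemma int_neg_of_neg {F : ℝ → ℝ} {a : ℝ} (hFint : IntegrableOn F (Ioc a (a + 1)) volume)
    (hF : ∀ S ∈ Ioc a (a + 1), F S < 0) : (∫ S in Ioc a (a + 1), F S) < 0 := by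
  have h1 : 0 < ∫ S in Ioc a (a + 1), -F S := by
    rw [setIntegral_pos_iff_support_of_nonneg_ae]
    · refine lt_of_lt_of_le ?_ (measure_mono (fun x hx =>
        (⟨ne_of_gt (by simpa using (hF x hx)), hx⟩ :
          x ∈ Function.support (fun S => -F S) ∩ Ioc a (a + 1))))
      rw [Real.volume_Ioc]
      norm_num
    · filter_upwards [ae_restrict_mem measurableSet_Ioc] with x hx
      simpa using (hF x hx).le
    · exact hFint.neg
  rw [integral_neg] at h1
  linarith

lemma key_le (hG : Measurable G) (hG0 : ∀ u, 0 ≤ G u)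
    (hGint : ∀ x : ℝ, IntegrableOn G (Ioc 1 x) volume)
    (hφm : Measurable φ) (hφ : IntegrableOn φ (Ioc (-1 : ℝ) 1) volume)
    (hφ0 : (∫ t in Ioc (-1 : ℝ) 1, φ t) = 0)
    (hΦ : ∀ᵐ t : ℝ, t ∈ Ioo (-1 : ℝ) 1 → Φ t = ∫ σ in Ioc (-1 : ℝ) t, φ σ)
    (g : ℝ → ℝ) (hgG : ∀ᵐ u : ℝ, u ∈ Ioi (0 : ℝ) → g u = G u)
    (hgtend : Tendsto g atTop (𝓝 0)) {M : ℝ}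
    (hΦb : ∀ᵐ t ∂(volume.restrict (Ioc (-1 : ℝ) 1)), ‖Φ t‖ ≤ M)
    {R : ℝ} (hR : 2 ≤ R)
    (hF : ∀ S, R + 1 ≤ S → (∫ t in Ioc (-1 : ℝ) 1, φ t * G (t + S)) ≤ 0) :
    (∫ t in Ioc (-1 : ℝ) 1, Φ t * G (t + R))
      ≤ ∫ S in Ioc R (R + 1), ∫ t in Ioc (-1 : ℝ) 1, φ t * G (t + S) := by
  set c := ∫ S in Ioc R (R + 1), ∫ t in Ioc (-1 : ℝ) 1, φ t * G (t + S) with hc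
  have htend : Tendsto (fun S => (∫ t in Ioc (-1 : ℝ) 1, Φ t * G (t + S)) + c)
      atTop (𝓝 (0 + c)) :=
    (tendsto_zero g hgG hgtend hΦb).add tendsto_const_nhds
  rw [zero_add] at htend
  refine ge_of_tendsto htend ?_
  filter_upwards [eventually_ge_atTop (R + 1)] with S hS
  have h1 := step1 hG hG0 hGint hφm hφ hφ0 hΦ hR (by linarith : R ≤ S)
  have hsplit : (∫ u in Ioc R S, ∫ t in Ioc (-1 : ℝ) 1, φ t * G (t + u))
      = c + ∫ u in Ioc (R + 1) S, ∫ t in Ioc (-1 : ℝ) 1, φ t * G (t + u) := by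
    rw [hc, ← setIntegral_union (Ioc_disjoint_Ioc_of_le le_rfl) measurableSet_Ioc
      (Fint hG hG0 hGint hφm hφ (R + 1) hR)
      ((Fint hG hG0 hGint hφm hφ S hR).mono_set (Ioc_subset_Ioc_left (by linarith))),
      Ioc_union_Ioc_eq_Ioc (by linarith) hS]
  have h2 : (∫ u in Ioc (R + 1) S, ∫ t in Ioc (-1 : ℝ) 1, φ t * G (t + u)) ≤ 0 :=
    setIntegral_nonpos measurableSet_Ioc (fun u hu => hF u hu.1.le)
  linarith [h1, hsplit, h2]



variable {g β' α' γ : ℝ → ℝ} {R₁ : ℝ}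

lemma coreA
    (hgtend : Tendsto g atTop (𝓝 0))
    (hgG : ∀ᵐ u : ℝ, u ∈ Ioi (0 : ℝ) → g u = G u)
    (hG : Measurable G) (hG0 : ∀ u, 0 ≤ G u)
    (hGint : ∀ x : ℝ, IntegrableOn G (Ioc 1 x) volume)
    (hβm : Measurable β') (hβi : IntegrableOn β' (Ioc (-1 : ℝ) 1) volume)
    (hβ0 : (∫ t in Ioc (-1 : ℝ) 1, β' t) = 0)
    (hαm : Measurable α') (hαi : IntegrableOn α' (Ioc (-1 : ℝ) 1) volume)
    (hα0 : (∫ t in Ioc (-1 : ℝ) 1, α' t) = 0)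
    (hαβ : ∀ᵐ t : ℝ, t ∈ Ioo (-1 : ℝ) 1 → α' t = ∫ σ in Ioc (-1 : ℝ) t, β' σ)
    (hγdef : ∀ t : ℝ, γ t = ∫ σ in Ioc (-1 : ℝ) t, α' σ)
    (hγpos : ∀ t ∈ Ioo (-1 : ℝ) 1, 0 < γ t)
    (hR₁ : 2 ≤ R₁)
    (hstrict : ∀ R, R₁ ≤ R → (∫ t in Ioc (-1 : ℝ) 1, β' t * G (t + R)) < 0) : False := by
  have hIooae : ∀ᵐ t ∂volume.restrict (Ioc (-1 : ℝ) 1), t ∈ Ioo (-1 : ℝ) 1 := by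
    rw [← Measure.restrict_congr_set Ioo_ae_eq_Ioc]
    exact ae_restrict_mem measurableSet_Ioo
  have hαb : ∀ᵐ t ∂volume.restrict (Ioc (-1 : ℝ) 1),
      ‖α' t‖ ≤ ∫ σ in Ioc (-1 : ℝ) 1, ‖β' σ‖ := by
    filter_upwards [hIooae, ae_restrict_of_ae hαβ] with t ht hrel
    rw [hrel ht]
    refine le_trans (norm_integral_le_integral_norm _) ?_
    refine setIntegral_mono_set hβi.norm ?_ ?_
    · filter_upwards with u using norm_nonneg _
    · exact HasSubset.Subset.eventuallyLE (Ioc_subset_Ioc_right ht.2.le)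
  have hγb : ∀ᵐ t ∂volume.restrict (Ioc (-1 : ℝ) 1),
      ‖γ t‖ ≤ ∫ σ in Ioc (-1 : ℝ) 1, ‖α' σ‖ := by
    filter_upwards [ae_restrict_mem measurableSet_Ioc] with t ht
    rw [hγdef t]
    refine le_trans (norm_integral_le_integral_norm _) ?_
    refine setIntegral_mono_set hαi.norm ?_ ?_
    · filter_upwards with u using norm_nonneg _
    · exact HasSubset.Subset.eventuallyLE (Ioc_subset_Ioc_right ht.2)
  have hγIoc : ∀ t ∈ Ioc (-1 : ℝ) 1, 0 ≤ γ t := by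
    intro t ht
    rcases lt_or_eq_of_le ht.2 with h | h
    · exact (hγpos t ⟨ht.1, h⟩).le
    · rw [hγdef t, h, hα0]
  have hγrel : ∀ᵐ t : ℝ, t ∈ Ioo (-1 : ℝ) 1 → γ t = ∫ σ in Ioc (-1 : ℝ) t, α' σ :=
    Eventually.of_forall fun t _ => hγdef t
  have hkα : ∀ R, R₁ ≤ R → (∫ t in Ioc (-1 : ℝ) 1, α' t * G (t + R)) < 0 := by
    intro R hR
    have hR2 : (2 : ℝ) ≤ R := le_trans hR₁ hR
    have h1 := key_le hG hG0 hGint hβm hβi hβ0 hαβ g hgG hgtend hαb hR2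
      (fun S hS => (hstrict S (by linarith)).le)
    have h2 : (∫ S in Ioc R (R + 1), ∫ t in Ioc (-1 : ℝ) 1, β' t * G (t + S)) < 0 :=
      int_neg_of_neg (Fint hG hG0 hGint hβm hβi (R + 1) hR2)
        (fun S hS => hstrict S (le_trans hR hS.1.le))
    linarith
  have h3 := key_le hG hG0 hGint hαm hαi hα0 hγrel g hgG hgtend hγb hR₁
    (fun S hS => (hkα S (by linarith)).le)
  have h4 : (∫ S in Ioc R₁ (R₁ + 1), ∫ t in Ioc (-1 : ℝ) 1, α' t * G (t + S)) < 0 :=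
    int_neg_of_neg (Fint hG hG0 hGint hαm hαi (R₁ + 1) hR₁)
      (fun S hS => hkα S hS.1.le)
  have h5 : 0 ≤ ∫ t in Ioc (-1 : ℝ) 1, γ t * G (t + R₁) :=
    setIntegral_nonneg measurableSet_Ioc fun t ht => mul_nonneg (hγIoc t ht) (hG0 _)
  linarith



lemma coreB
    (hgtend : Tendsto g atTop (𝓝 0))
    (hgG : ∀ᵐ u : ℝ, u ∈ Ioi (0 : ℝ) → g u = G u)
    (hG : Measurable G) (hG0 : ∀ u, 0 ≤ G u)
    (hGint : ∀ x : ℝ, IntegrableOn G (Ioc 1 x) volume)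
    (hβm : Measurable β') (hβi : IntegrableOn β' (Ioc (-1 : ℝ) 1) volume)
    (hβ0 : (∫ t in Ioc (-1 : ℝ) 1, β' t) = 0)
    (hαm : Measurable α') (hαi : IntegrableOn α' (Ioc (-1 : ℝ) 1) volume)
    (hα0 : (∫ t in Ioc (-1 : ℝ) 1, α' t) = 0)
    (hαβ : ∀ᵐ t : ℝ, t ∈ Ioo (-1 : ℝ) 1 → α' t = ∫ σ in Ioc (-1 : ℝ) t, β' σ)
    (hγdef : ∀ t : ℝ, γ t = ∫ σ in Ioc (-1 : ℝ) t, α' σ)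
    (hγpos : ∀ t ∈ Ioo (-1 : ℝ) 1, 0 < γ t)
    (hγm : AEStronglyMeasurable γ (volume.restrict (Ioc (-1 : ℝ) 1)))
    (hR₁ : 2 ≤ R₁)
    (hw : ∀ R, R₁ ≤ R → (∫ t in Ioc (-1 : ℝ) 1, β' t * G (t + R)) ≤ 0) :
    ∀ᵐ u : ℝ, R₁ < u → G u = 0 := by
  have hIooae : ∀ᵐ t ∂volume.restrict (Ioc (-1 : ℝ) 1), t ∈ Ioo (-1 : ℝ) 1 := by
    rw [← Measure.restrict_congr_set Ioo_ae_eq_Ioc]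
    exact ae_restrict_mem measurableSet_Ioo
  have hαb : ∀ᵐ t ∂volume.restrict (Ioc (-1 : ℝ) 1),
      ‖α' t‖ ≤ ∫ σ in Ioc (-1 : ℝ) 1, ‖β' σ‖ := by
    filter_upwards [hIooae, ae_restrict_of_ae hαβ] with t ht hrel
    rw [hrel ht]
    refine le_trans (norm_integral_le_integral_norm _) ?_
    refine setIntegral_mono_set hβi.norm ?_ ?_
    · filter_upwards with u using norm_nonneg _
    · exact HasSubset.Subset.eventuallyLE (Ioc_subset_Ioc_right ht.2.le)
  have hγb : ∀ᵐ t ∂volume.restrict (Ioc (-1 : ℝ) 1),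
      ‖γ t‖ ≤ ∫ σ in Ioc (-1 : ℝ) 1, ‖α' σ‖ := by
    filter_upwards [ae_restrict_mem measurableSet_Ioc] with t ht
    rw [hγdef t]
    refine le_trans (norm_integral_le_integral_norm _) ?_
    refine setIntegral_mono_set hαi.norm ?_ ?_
    · filter_upwards with u using norm_nonneg _
    · exact HasSubset.Subset.eventuallyLE (Ioc_subset_Ioc_right ht.2)
  have hγIoc : ∀ t ∈ Ioc (-1 : ℝ) 1, 0 ≤ γ t := by
    intro t ht
    rcases lt_or_eq_of_le ht.2 with h | h
    · exact (hγpos t ⟨ht.1, h⟩).le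
    · rw [hγdef t, h, hα0]
  have hγrel : ∀ᵐ t : ℝ, t ∈ Ioo (-1 : ℝ) 1 → γ t = ∫ σ in Ioc (-1 : ℝ) t, α' σ :=
    Eventually.of_forall fun t _ => hγdef t
  have hkα : ∀ R, R₁ ≤ R → (∫ t in Ioc (-1 : ℝ) 1, α' t * G (t + R)) ≤ 0 := by
    intro R hR
    have hR2 : (2 : ℝ) ≤ R := le_trans hR₁ hR
    have h1 := key_le hG hG0 hGint hβm hβi hβ0 hαβ g hgG hgtend hαb hR2
      (fun S hS => hw S (by linarith))
    have h2 : (∫ S in Ioc R (R + 1), ∫ t in Ioc (-1 : ℝ) 1, β' t * G (t + S)) ≤ 0 :=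
      setIntegral_nonpos measurableSet_Ioc (fun S hS => hw S (le_trans hR hS.1.le))
    linarith
  have hm0 : ∀ R, R₁ ≤ R → (∫ t in Ioc (-1 : ℝ) 1, γ t * G (t + R)) = 0 := by
    intro R hR
    have hR2 : (2 : ℝ) ≤ R := le_trans hR₁ hR
    have h1 := key_le hG hG0 hGint hαm hαi hα0 hγrel g hgG hgtend hγb hR2
      (fun S hS => hkα S (by linarith))
    have h2 : (∫ S in Ioc R (R + 1), ∫ t in Ioc (-1 : ℝ) 1, α' t * G (t + S)) ≤ 0 :=
      setIntegral_nonpos measurableSet_Ioc (fun S hS => hkα S (le_trans hR hS.1.le))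
    have h5 : 0 ≤ ∫ t in Ioc (-1 : ℝ) 1, γ t * G (t + R) :=
      setIntegral_nonneg measurableSet_Ioc fun t ht => mul_nonneg (hγIoc t ht) (hG0 _)
    linarith
  have hvanish : ∀ R, R₁ ≤ R → ∀ᵐ u : ℝ, u ∈ Ioo (R - 1) (R + 1) → G u = 0 := by
    intro R hR
    have hR2 : (2 : ℝ) ≤ R := le_trans hR₁ hR
    have hGtr : Integrable (fun t => G (t + R)) (volume.restrict (Ioc (-1 : ℝ) 1)) :=
      integrableOn_comp_add G R (by norm_num : (-1 : ℝ) ≤ 1)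
        ((hGint (1 + R)).mono_set (fun u hu => ⟨by linarith [hu.1], hu.2⟩))
    have hint : Integrable (fun t => γ t * G (t + R)) (volume.restrict (Ioc (-1 : ℝ) 1)) := by
      refine Integrable.mono' (hGtr.const_mul (∫ σ in Ioc (-1 : ℝ) 1, ‖α' σ‖))
        (hγm.mul (hG.comp (measurable_add_const R)).aestronglyMeasurable) ?_
      filter_upwards [hγb] with t htb
      rw [norm_mul, Real.norm_of_nonneg (hG0 _)]
      exact mul_le_mul_of_nonneg_right htb (hG0 _)
    have hnn : 0 ≤ᵐ[volume.restrict (Ioc (-1 : ℝ) 1)] fun t => γ t * G (t + R) := by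
      filter_upwards [ae_restrict_mem measurableSet_Ioc] with t ht
      exact mul_nonneg (hγIoc t ht) (hG0 _)
    have hz := (integral_eq_zero_iff_of_nonneg_ae hnn hint).1 (hm0 R hR)
    have hz' : ∀ᵐ t : ℝ, t ∈ Ioo (-1 : ℝ) 1 → G (t + R) = 0 := by
      have h := (ae_restrict_iff' measurableSet_Ioc).1 hz
      filter_upwards [h] with t h2 ht
      have h0 := h2 (Ioo_subset_Ioc_self ht)
      rcases mul_eq_zero.1 h0 with h' | h'
      · exact absurd h' (ne_of_gt (hγpos t ht))
      · exact h'
    have hz'' := ae_comp_add (-R) hz'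
    filter_upwards [hz''] with u hu huIoo
    have hmem : u + -R ∈ Ioo (-1 : ℝ) 1 := ⟨by linarith [huIoo.1], by linarith [huIoo.2]⟩
    have := hu hmem
    simpa using this
  have hcount : ∀ᵐ u : ℝ, ∀ n : ℕ, u ∈ Ioo (R₁ + n) (R₁ + n + 2) → G u = 0 := by
    rw [ae_all_iff]
    intro n
    have h := hvanish (R₁ + n + 1) (by linarith [Nat.cast_nonneg (α := ℝ) n])
    simpa [show (R₁ + (n : ℝ) + 1) - 1 = R₁ + (n : ℝ) by ring,
      show (R₁ + (n : ℝ) + 1) + 1 = R₁ + (n : ℝ) + 2 by ring] using h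
  filter_upwards [hcount] with u hu hlt
  have hd0 : 0 < u - R₁ := by linarith
  set n := ⌊u - R₁⌋₊ with hn
  have hfl : (n : ℝ) ≤ u - R₁ := Nat.floor_le hd0.le
  have hfu : u - R₁ < n + 1 := Nat.lt_floor_add_one _
  rcases lt_or_eq_of_le hfl with h | h
  · exact hu n ⟨by linarith, by linarith⟩
  · have hne : n ≠ 0 := by
      intro h0
      rw [h0] at h
      simp at h
      linarith
    obtain ⟨m, hm⟩ := Nat.exists_eq_succ_of_ne_zero hne
    have hmr : ((m : ℝ) + 1) = u - R₁ := by
      rw [← h, hm]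
      push_cast
      ring
    exact hu m ⟨by linarith, by linarith⟩



end Lem35

open Lem35 in
/-- Lemma 3.5: given a nonnegative weight `g` vanishing at infinity and a function `β` on
`(-1,1)` whose primitive `α` has zero mean, positive partial integrals, and `α(1) = 0`,
there exist arbitrarily large `R` with `∫_{-1}^1 β(t) g(t+R) dt ≥ 0`, with strict
inequality if `g` is not eventually zero. -/
theorem exists_large_R_integral_nonneg_of_primitive
    (g : ℝ → ℝ) (β : ℝ → ℝ) (α : ℝ → ℝ)
    (hg0 : ∀ t ∈ Set.Ioi (0 : ℝ), 0 ≤ g t)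
    (hgloc : LocallyIntegrableOn g (Set.Ioi (0 : ℝ)) volume)
    (hgtend : Tendsto g atTop (𝓝 0))
    (hβint : IntegrableOn β (Set.Ioo (-1 : ℝ) 1) volume)
    (hα : ∀ t ∈ Set.Ioo (-1 : ℝ) 1, α t = ∫ σ in (-1 : ℝ)..t, β σ)
    (hαint : IntegrableOn α (Set.Ioo (-1 : ℝ) 1) volume)
    (hαzero : (∫ t in (-1 : ℝ)..1, α t) = 0)
    (hαpos : ∀ σ ∈ Set.Ioo (-1 : ℝ) 1, 0 < ∫ t in (-1 : ℝ)..σ, α t)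
    (hβzero : (∫ σ in (-1 : ℝ)..1, β σ) = 0)
    (R₀ : ℝ) (hR₀ : 0 < R₀) :
    (∃ R ≥ R₀, 0 ≤ ∫ t in (-1 : ℝ)..1, β t * g (t + R)) ∧
    ((∀ T : ℝ, 0 < volume {t : ℝ | T < t ∧ 0 < g t}) →
      ∃ R ≥ R₀, 0 < ∫ t in (-1 : ℝ)..1, β t * g (t + R)) := by
  classical
  -- measurable representative of `g`
  have hgsm : AEStronglyMeasurable g (volume.restrict (Ioi (0 : ℝ))) :=
    hgloc.aestronglyMeasurable
  set G : ℝ → ℝ := fun u => max (hgsm.mk g u) 0 with hGdef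
  have hG : Measurable G := (hgsm.stronglyMeasurable_mk.measurable).max measurable_const
  have hG0 : ∀ u, 0 ≤ G u := fun u => le_max_right _ _
  have hgG : ∀ᵐ u : ℝ, u ∈ Ioi (0 : ℝ) → g u = G u := by
    have h := (ae_restrict_iff' measurableSet_Ioi).1 hgsm.ae_eq_mk
    filter_upwards [h] with u h1 hu
    have hGu : G u = max (hgsm.mk g u) 0 := rfl
    rw [hGu, ← h1 hu, max_eq_left (hg0 u hu)]
  have hGint : ∀ x : ℝ, IntegrableOn G (Ioc 1 x) volume := by
    intro x
    rcases le_or_gt x 1 with h | h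
    · rw [Ioc_eq_empty (not_lt.mpr h)]
      exact integrableOn_empty
    · have h1 : IntegrableOn g (Icc (1 : ℝ) x) volume :=
        hgloc.integrableOn_compact_subset
          (fun u hu => lt_of_lt_of_le one_pos hu.1) isCompact_Icc
      refine (h1.mono_set Ioc_subset_Icc_self).congr ?_
      filter_upwards [ae_restrict_of_ae hgG, ae_restrict_mem measurableSet_Ioc] with u h2 hu
      exact h2 (lt_trans one_pos hu.1)
  -- measurable representative of `β`
  have hβIoc : IntegrableOn β (Ioc (-1 : ℝ) 1) volume := by
    rwa [IntegrableOn, ← Measure.restrict_congr_set Ioo_ae_eq_Ioc]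
  set β' : ℝ → ℝ := hβIoc.1.mk β with hβ'def
  have hβm : Measurable β' := hβIoc.1.stronglyMeasurable_mk.measurable
  have hββ' : β =ᵐ[volume.restrict (Ioc (-1 : ℝ) 1)] β' := hβIoc.1.ae_eq_mk
  have hβi : IntegrableOn β' (Ioc (-1 : ℝ) 1) volume := hβIoc.congr hββ'
  have hβ0 : (∫ t in Ioc (-1 : ℝ) 1, β' t) = 0 := by
    rw [← integral_congr_ae hββ', ← intervalIntegral.integral_of_le (by norm_num : (-1 : ℝ) ≤ 1)]
    exact hβzero
  -- measurable representative of `α`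
  have hαIoc : IntegrableOn α (Ioc (-1 : ℝ) 1) volume := by
    rwa [IntegrableOn, ← Measure.restrict_congr_set Ioo_ae_eq_Ioc]
  set α' : ℝ → ℝ := hαIoc.1.mk α with hα'def
  have hαm : Measurable α' := hαIoc.1.stronglyMeasurable_mk.measurable
  have hαα' : α =ᵐ[volume.restrict (Ioc (-1 : ℝ) 1)] α' := hαIoc.1.ae_eq_mk
  have hαi : IntegrableOn α' (Ioc (-1 : ℝ) 1) volume := hαIoc.congr hαα'
  have hα0 : (∫ t in Ioc (-1 : ℝ) 1, α' t) = 0 := by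
    rw [← integral_congr_ae hαα', ← intervalIntegral.integral_of_le (by norm_num : (-1 : ℝ) ≤ 1)]
    exact hαzero
  have hαβ : ∀ᵐ t : ℝ, t ∈ Ioo (-1 : ℝ) 1 → α' t = ∫ σ in Ioc (-1 : ℝ) t, β' σ := by
    have h := (ae_restrict_iff' measurableSet_Ioc).1 hαα'
    filter_upwards [h] with t h1 ht
    rw [← h1 (Ioo_subset_Ioc_self ht), hα t ht,
      intervalIntegral.integral_of_le (by linarith [ht.1] : (-1 : ℝ) ≤ t)]
    exact integral_congr_ae
      (ae_restrict_of_ae_restrict_of_subset (Ioc_subset_Ioc_right ht.2.le) hββ')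
  -- the second primitive
  set γ : ℝ → ℝ := fun σ => ∫ u in Ioc (-1 : ℝ) σ, α' u with hγdef'
  have hγdef : ∀ t : ℝ, γ t = ∫ σ in Ioc (-1 : ℝ) t, α' σ := fun t => rfl
  have hγpos : ∀ t ∈ Ioo (-1 : ℝ) 1, 0 < γ t := by
    intro t ht
    have h := hαpos t ht
    rw [intervalIntegral.integral_of_le (by linarith [ht.1] : (-1 : ℝ) ≤ t)] at h
    have heq : (∫ σ in Ioc (-1 : ℝ) t, α σ) = γ t :=
      integral_congr_ae
        (ae_restrict_of_ae_restrict_of_subset (Ioc_subset_Ioc_right ht.2.le) hαα')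
    rw [heq] at h
    exact h
  have hγm : AEStronglyMeasurable γ (volume.restrict (Ioc (-1 : ℝ) 1)) := by
    have hicc : IntegrableOn α' (Icc (-1 : ℝ) 1) volume := by
      rwa [IntegrableOn, Measure.restrict_congr_set Ioc_ae_eq_Icc] at hαi
    have hcont := intervalIntegral.continuousOn_primitive (f := α') (μ := volume) hicc
    have h2 : AEStronglyMeasurable γ (volume.restrict (Icc (-1 : ℝ) 1)) :=
      hcont.aestronglyMeasurable measurableSet_Icc
    rwa [← Measure.restrict_congr_set Ioc_ae_eq_Icc] at h2
  -- conversions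
  set R₁ : ℝ := max R₀ 2 with hR₁def
  have hR₁2 : (2 : ℝ) ≤ R₁ := le_max_right _ _
  have hR₁0 : R₀ ≤ R₁ := le_max_left _ _
  have hconv : ∀ R, 2 ≤ R → (∫ t in (-1 : ℝ)..1, β t * g (t + R))
      = ∫ t in Ioc (-1 : ℝ) 1, β' t * G (t + R) := by
    intro R hR
    rw [intervalIntegral.integral_of_le (by norm_num : (-1 : ℝ) ≤ 1)]
    refine integral_congr_ae ?_
    have hgGR := ae_comp_add R hgG
    filter_upwards [hββ', ae_restrict_of_ae hgGR, ae_restrict_mem measurableSet_Ioc]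
      with t h1 h2 ht
    rw [h1, h2 (by simp only [mem_Ioi]; linarith [ht.1])]
  constructor
  · by_contra hcon
    push_neg at hcon
    refine coreA hgtend hgG hG hG0 hGint hβm hβi hβ0 hαm hαi hα0 hαβ hγdef hγpos hR₁2 ?_
    intro R hR
    rw [← hconv R (le_trans hR₁2 hR)]
    exact hcon R (le_trans hR₁0 hR)
  · intro hvol
    by_contra hcon
    push_neg at hcon
    have hw : ∀ R, R₁ ≤ R → (∫ t in Ioc (-1 : ℝ) 1, β' t * G (t + R)) ≤ 0 := by
      intro R hR
      rw [← hconv R (le_trans hR₁2 hR)]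
      exact hcon R (le_trans hR₁0 hR)
    have hvan := coreB hgtend hgG hG hG0 hGint hβm hβi hβ0 hαm hαi hα0 hαβ hγdef hγpos hγm
      hR₁2 hw
    have hEnull : volume {u : ℝ | ¬ (R₁ < u → G u = 0)} = 0 := ae_iff.1 hvan
    have hFnull : volume {u : ℝ | ¬ (u ∈ Ioi (0 : ℝ) → g u = G u)} = 0 := ae_iff.1 hgG
    have hnull : volume {t : ℝ | R₁ < t ∧ 0 < g t} = 0 := by
      refine measure_mono_null ?_ (measure_union_null hEnull hFnull)
      intro t ht
      simp only [mem_setOf_eq] at ht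
      rcases ht with ⟨ht1, ht2⟩
      by_cases hgt : g t = G t
      · refine mem_union_left _ ?_
        simp only [mem_setOf_eq]
        intro hcontra
        rw [hgt, hcontra ht1] at ht2
        exact lt_irrefl 0 ht2
      · refine mem_union_right _ ?_
        simp only [mem_setOf_eq]
        intro hcontra
        exact hgt (hcontra (by simp only [mem_Ioi]; linarith))
    exact absurd hnull (hvol R₁).ne'
end

section
/- Let N ≥ 2, C > 0, T ∈ ℝ, and let m : [T, ∞) → [0, ∞) be nonincreasing and locally absolutely continuous, satisfying m(t) ≤ C (−m'(t))^{N/(N−1)} for almost every t ≥ T. Then m vanishes in finite time: there exists T' ≥ T such that m(t) = 0 for all t ≥ T'. -/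
open MeasureTheory Set intervalIntegral
set_option maxHeartbeats 1000000 in

/-- The ODE comparison lemma: a nonnegative, nonincreasing, locally absolutely continuous
function `m` on `[T, ∞)` (written via its a.e. derivative `m'` through the fundamental
theorem of calculus) satisfying `m(t) ≤ C (−m'(t))^{N/(N−1)}` a.e. vanishes in finite
time. -/
theorem vanishes_in_finite_time
    (N : ℕ) (hN : 2 ≤ N) (C T : ℝ) (hC : 0 < C)
    (m m' : ℝ → ℝ)
    (hm0 : ∀ t ∈ Set.Ici T, 0 ≤ m t)
    (hmono : AntitoneOn m (Set.Ici T))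
    (hint : ∀ t ∈ Set.Ici T, IntegrableOn m' (Set.Icc T t) volume)
    (hftc : ∀ t ∈ Set.Ici T, m t = m T + ∫ u in T..t, m' u)
    (hineq : ∀ᵐ t ∂volume, t ∈ Set.Ici T → m t ≤ C * (-(m' t)) ^ ((N : ℝ) / ((N : ℝ) - 1))) :
    ∃ T' ≥ T, ∀ t ≥ T', m t = 0 := by
  have hN1 : (1:ℝ) < (N:ℝ) := by exact_mod_cast lt_of_lt_of_le one_lt_two hN
  set β : ℝ := (N : ℝ) / ((N : ℝ) - 1) with hβ
  set α : ℝ := ((N : ℝ) - 1) / (N : ℝ) with hα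
  have hα0 : 0 < α := div_pos (by linarith) (by linarith)
  have hα1 : α < 1 := by
    rw [hα, div_lt_one (by linarith)]; linarith
  have hαβ : β * α = 1 := by
    rw [hβ, hα, div_mul_div_comm, mul_comm ((N:ℝ)) _]
    exact div_self (by nlinarith)
  -- interval integrability
  have hii : ∀ s t : ℝ, T ≤ s → s ≤ t → IntervalIntegrable m' volume s t := by
    intro s t hs hst
    have : IntegrableOn m' (Icc s t) volume :=
      (hint t (le_trans hs hst)).mono_set (Icc_subset_Icc_left hs)
    exact IntegrableOn.intervalIntegrable (by rwa [uIcc_of_le hst])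
  -- difference formula
  have hdiff : ∀ s t : ℝ, T ≤ s → s ≤ t → m t - m s = ∫ u in s..t, m' u := by
    intro s t hs hst
    have h1 := hftc s hs
    have h2 := hftc t (le_trans hs hst)
    have h3 : (∫ u in T..s, m' u) + ∫ u in s..t, m' u = ∫ u in T..t, m' u :=
      integral_add_adjacent_intervals (hii T s le_rfl hs) (hii s t hs hst)
    rw [h1, h2, ← h3]; ring
  -- sign of m'
  have hsign : ∀ᵐ u ∂volume, u ∈ Ioi T → m' u ≤ 0 := by
    have hn : ∀ n : ℕ, ∀ᵐ u ∂volume, u ∈ Ioo T (T + n) → m' u ≤ 0 := by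
      intro n
      set R : ℝ := T + n with hR
      have hTR : T ≤ R := by
        rw [hR]; nlinarith [Nat.cast_nonneg (α := ℝ) n]
      set f : ℝ → ℝ := (Icc T R).indicator m' with hfdef
      have hfint : Integrable f volume := by
        rw [hfdef, integrable_indicator_iff measurableSet_Icc]
        exact hint R hTR
      have hloc : MeasureTheory.LocallyIntegrable f volume := hfint.locallyIntegrable
      filter_upwards [IsUnifLocDoublingMeasure.ae_tendsto_average (μ := volume) hloc 1]
        with x hx hmem
      obtain ⟨hTx, hxR⟩ := hmem
      have hδ : Filter.Tendsto (fun h : ℝ => h / 2) (nhdsWithin 0 (Ioi 0)) (nhdsWithin 0 (Ioi 0)) := by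
        apply tendsto_nhdsWithin_of_tendsto_nhds_of_eventually_within
        · have h0 : Filter.Tendsto (fun h : ℝ => h / 2) (nhds 0) (nhds 0) := by
            simpa using (Filter.tendsto_id : Filter.Tendsto id (nhds (0:ℝ)) (nhds 0)).div_const (2:ℝ)
          exact h0.mono_left nhdsWithin_le_nhds
        · filter_upwards [self_mem_nhdsWithin] with h hh
          exact mem_Ioi.mpr (by linarith [mem_Ioi.mp hh])
      have hball : ∀ᶠ h : ℝ in nhdsWithin 0 (Ioi 0),
          x ∈ Metric.closedBall (x + h / 2) (1 * (h / 2)) := by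
        filter_upwards [self_mem_nhdsWithin] with h hh
        have h0 : (0:ℝ) < h := mem_Ioi.mp hh
        rw [one_mul, Metric.mem_closedBall, Real.dist_eq, abs_of_nonpos (by linarith)]
        linarith
      have htend := hx (fun h : ℝ => x + h / 2) (fun h : ℝ => h / 2) hδ hball
      have hxmem : x ∈ Icc T R := mem_Icc.mpr ⟨le_of_lt hTx, le_of_lt hxR⟩
      have hfx : f x = m' x := by rw [hfdef]; exact Set.indicator_of_mem hxmem m'
      rw [hfx] at htend
      refine le_of_tendsto htend ?_
      filter_upwards [Ioo_mem_nhdsGT_of_mem (⟨le_refl (0:ℝ), sub_pos.mpr hxR⟩ : (0:ℝ) ∈ Ico 0 (R - x))]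
        with h hh
      obtain ⟨h0, hRx⟩ := hh
      have hBall : Metric.closedBall (x + h / 2) (h / 2) = Icc x (x + h) := by
        rw [Real.closedBall_eq_Icc]
        congr 1 <;> ring
      have hsub : Icc x (x + h) ⊆ Icc T R := Icc_subset_Icc (le_of_lt hTx) (by linarith)
      have hIval : ∫ y in Icc x (x + h), f y = m (x + h) - m x := by
        rw [hfdef, setIntegral_indicator measurableSet_Icc,
          inter_eq_self_of_subset_left hsub, integral_Icc_eq_integral_Ioc,
          ← intervalIntegral.integral_of_le (by linarith : x ≤ x + h)]
        exact (hdiff x (x + h) (le_of_lt hTx) (by linarith)).symm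
      have hmx : m (x + h) - m x ≤ 0 := by
        have := hmono (mem_Ici.mpr (le_of_lt hTx)) (mem_Ici.mpr (by linarith : T ≤ x + h))
          (by linarith : x ≤ x + h)
        linarith
      rw [hBall, setAverage_eq, hIval, smul_eq_mul]
      exact mul_nonpos_of_nonneg_of_nonpos (by positivity) hmx
    rw [← MeasureTheory.ae_all_iff] at hn
    filter_upwards [hn] with u hu huT
    obtain ⟨n, hnu⟩ := exists_nat_gt (u - T)
    exact hu n ⟨huT, by linarith⟩
  -- key differential inequality, integrated
  have hkey : ∀ s t : ℝ, T ≤ s → s ≤ t → (t - s) * (m t / C) ^ α ≤ m s := by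
    intro s t hs hst
    have hmt0 : 0 ≤ m t := hm0 t (mem_Ici.mpr (hs.trans hst))
    have hms0 : 0 ≤ m s := hm0 s (mem_Ici.mpr hs)
    have hne : ∀ᵐ u : ℝ ∂volume, u ≠ T := by
      rw [MeasureTheory.ae_iff]
      have : {u : ℝ | ¬ u ≠ T} = {T} := by ext u; simp
      rw [this]
      exact Real.volume_singleton
    have hptwise : ∀ᵐ u ∂(volume.restrict (Icc s t)), m' u ≤ -((m t / C) ^ α) := by
      filter_upwards [ae_restrict_of_ae hineq, ae_restrict_of_ae hsign, ae_restrict_of_ae hne,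
        MeasureTheory.ae_restrict_mem measurableSet_Icc] with u h1 h2 h3 h4
      obtain ⟨hsu, hut⟩ := h4
      have huT : T ≤ u := hs.trans hsu
      have huT' : T < u := lt_of_le_of_ne huT (Ne.symm h3)
      have hu1 := h1 (mem_Ici.mpr huT)
      have hu2 := h2 (mem_Ioi.mpr huT')
      have h4' : m t ≤ m u := hmono (mem_Ici.mpr huT) (mem_Ici.mpr (hs.trans hst)) hut
      have h5 : m t / C ≤ (-m' u) ^ β := by
        rw [div_le_iff₀ hC, mul_comm]
        exact h4'.trans hu1
      have h6 : (m t / C) ^ α ≤ ((-m' u) ^ β) ^ α :=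
        Real.rpow_le_rpow (div_nonneg hmt0 hC.le) h5 hα0.le
      have h7 : ((-m' u) ^ β) ^ α = -m' u := by
        rw [← Real.rpow_mul (neg_nonneg.mpr hu2), hαβ, Real.rpow_one]
      rw [h7] at h6
      linarith
    have h8 : (∫ u in s..t, m' u) ≤ ∫ u in s..t, (-((m t / C) ^ α)) :=
      intervalIntegral.integral_mono_ae_restrict hst (hii s t hs hst)
        intervalIntegrable_const hptwise
    have h9 : (∫ u in s..t, (-((m t / C) ^ α)) : ℝ) = -((t - s) * (m t / C) ^ α) := by
      rw [intervalIntegral.integral_const, smul_eq_mul]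
      ring
    have h10 := hdiff s t hs hst
    rw [h9] at h8
    linarith
  by_cases hmT : m T ≤ 0
  · refine ⟨T, le_rfl, fun t ht => le_antisymm ?_ (hm0 t (mem_Ici.mpr ht))⟩
    exact (hmono (mem_Ici.mpr le_rfl) (mem_Ici.mpr ht) ht).trans hmT
  · push_neg at hmT
    obtain ⟨a, ha⟩ : ∃ a : ℝ, a = m T := ⟨_, rfl⟩
    rw [← ha] at hmT
    obtain ⟨q, hq⟩ : ∃ q : ℝ, q = ((2:ℝ) ^ (1 - α))⁻¹ := ⟨_, rfl⟩
    have h2α : (1:ℝ) < (2:ℝ) ^ (1 - α) :=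
      (Real.one_lt_rpow_iff_of_pos two_pos).mpr (Or.inl ⟨one_lt_two, by linarith⟩)
    have hq0 : 0 < q := by rw [hq]; positivity
    have hq1 : q < 1 := by rw [hq]; exact inv_lt_one_of_one_lt₀ h2α
    obtain ⟨D, hD⟩ : ∃ D : ℝ, D = 2 * C ^ α * a ^ (1 - α) := ⟨_, rfl⟩
    have hD0 : 0 ≤ D := by
      rw [hD]
      have := Real.rpow_nonneg hmT.le (1 - α)
      have := Real.rpow_nonneg hC.le α
      positivity
    obtain ⟨r, hr⟩ : ∃ r : ℝ, r = (1 - q)⁻¹ := ⟨_, rfl⟩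
    have hr0 : 0 ≤ r := by rw [hr]; exact inv_nonneg.mpr (by linarith)
    have hr1 : (1 - q) * r = 1 := by
      rw [hr]; exact mul_inv_cancel₀ (ne_of_gt (by linarith))
    obtain ⟨T', hT'⟩ : ∃ T' : ℝ, T' = T + D * r := ⟨_, rfl⟩
    let seq : ℕ → ℝ := fun n => Nat.rec T (fun _ s => s + 2 * C ^ α * (m s) ^ (1 - α)) n
    have hseqS : ∀ n, seq (n + 1) = seq n + 2 * C ^ α * (m (seq n)) ^ (1 - α) := fun n => rfl
    have hmem : ∀ n, T ≤ seq n := by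
      intro n
      induction n with
      | zero => exact le_rfl
      | succ k ih =>
        rw [hseqS]
        have h1 : 0 ≤ (m (seq k)) ^ (1 - α) := Real.rpow_nonneg (hm0 _ (mem_Ici.mpr ih)) _
        have h2 : 0 ≤ C ^ α := Real.rpow_nonneg hC.le α
        nlinarith
    have hmono_seq : ∀ n, seq n ≤ seq (n + 1) := by
      intro n
      rw [hseqS]
      have h1 : 0 ≤ (m (seq n)) ^ (1 - α) := Real.rpow_nonneg (hm0 _ (mem_Ici.mpr (hmem n))) _
      have h2 : 0 ≤ C ^ α := Real.rpow_nonneg hC.le α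
      nlinarith
    have hhalf : ∀ n, m (seq (n + 1)) ≤ m (seq n) / 2 := by
      intro n
      by_contra hcon
      push_neg at hcon
      set x : ℝ := m (seq n) with hx
      have hmono1 : m (seq (n + 1)) ≤ x :=
        hmono (mem_Ici.mpr (hmem n)) (mem_Ici.mpr (hmem (n + 1))) (hmono_seq n)
      have hx0 : 0 < x := by linarith
      have hk := hkey (seq n) (seq (n + 1)) (hmem n) (hmono_seq n)
      have h2 : seq (n + 1) - seq n = 2 * C ^ α * x ^ (1 - α) := by rw [hseqS]; ring
      rw [h2] at hk
      have hCα : 0 < C ^ α := Real.rpow_pos_of_pos hC α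
      have hxα : 0 ≤ (2:ℝ) * C ^ α * x ^ (1 - α) := by
        have := Real.rpow_nonneg hx0.le (1 - α)
        positivity
      have h1 : (x / 2 / C) ^ α ≤ (m (seq (n + 1)) / C) ^ α := by
        apply Real.rpow_le_rpow (by positivity) _ hα0.le
        exact (div_le_div_iff_of_pos_right hC).mpr hcon.le
      have hchain : 2 * C ^ α * x ^ (1 - α) * ((x / 2 / C) ^ α) ≤ x := by
        calc 2 * C ^ α * x ^ (1 - α) * ((x / 2 / C) ^ α)
            ≤ 2 * C ^ α * x ^ (1 - α) * ((m (seq (n + 1)) / C) ^ α) :=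
              mul_le_mul_of_nonneg_left h1 hxα
          _ ≤ x := hk
      have hxx : x ^ (1 - α) * x ^ α = x := by
        rw [← Real.rpow_add hx0]
        simp
      have h2C : ((0:ℝ) < (2:ℝ) ^ α) := Real.rpow_pos_of_pos two_pos α
      have hcomp : 2 * C ^ α * x ^ (1 - α) * ((x / 2 / C) ^ α) = 2 / (2:ℝ) ^ α * x := by
        rw [div_div, Real.div_rpow hx0.le (by positivity), Real.mul_rpow (by norm_num) hC.le]
        field_simp
        linear_combination hxx
      rw [hcomp] at hchain
      have h2α2 : (2:ℝ) ^ α < 2 := by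
        have h := Real.rpow_lt_rpow_of_exponent_lt one_lt_two hα1
        rwa [Real.rpow_one] at h
      have hgt : 1 < 2 / (2:ℝ) ^ α := by
        rw [lt_div_iff₀ h2C]
        linarith
      nlinarith [hgt, hx0, hchain]
    have hbound : ∀ n, m (seq n) ≤ a / 2 ^ n := by
      intro n
      induction n with
      | zero => simp only [pow_zero, div_one]; exact le_of_eq (by rw [ha]; exact rfl)
      | succ k ih =>
        have h1 := hhalf k
        have h2 : m (seq k) / 2 ≤ a / 2 ^ k / 2 := by linarith
        calc m (seq (k + 1)) ≤ m (seq k) / 2 := h1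
          _ ≤ a / 2 ^ k / 2 := h2
          _ = a / 2 ^ (k + 1) := by rw [pow_succ]; ring
    have hpow : ∀ n : ℕ, ((2:ℝ) ^ n) ^ (1 - α) = ((2:ℝ) ^ (1 - α)) ^ n := by
      intro n
      rw [← Real.rpow_natCast (2:ℝ) n, ← Real.rpow_mul (by norm_num), mul_comm,
        Real.rpow_mul (by norm_num), Real.rpow_natCast]
    have hstep_le : ∀ n, seq (n + 1) ≤ seq n + D * q ^ n := by
      intro n
      rw [hseqS]
      have h1 : (m (seq n)) ^ (1 - α) ≤ (a / 2 ^ n) ^ (1 - α) :=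
        Real.rpow_le_rpow (hm0 _ (mem_Ici.mpr (hmem n))) (hbound n) (by linarith)
      have h2 : (a / 2 ^ n : ℝ) ^ (1 - α) = a ^ (1 - α) * q ^ n := by
        rw [Real.div_rpow hmT.le (by positivity), hpow n, hq, div_eq_mul_inv, inv_pow]
      rw [h2] at h1
      have hCα : 0 < C ^ α := Real.rpow_pos_of_pos hC α
      have : 2 * C ^ α * (m (seq n)) ^ (1 - α) ≤ 2 * C ^ α * (a ^ (1 - α) * q ^ n) := by
        apply mul_le_mul_of_nonneg_left h1 (by positivity)
      rw [hD]
      nlinarith [this]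
    have hinv : ∀ n, seq n + D * q ^ n * r ≤ T' := by
      intro n
      induction n with
      | zero =>
        have h0 : seq 0 = T := rfl
        rw [h0, hT']
        simp
      | succ k ih =>
        have hid : D * q ^ k + D * q ^ (k + 1) * r = D * q ^ k * r := by
          linear_combination (-(D * q ^ k)) * hr1
        have := hstep_le k
        linarith
    have hseqT' : ∀ n, seq n ≤ T' := by
      intro n
      have h1 : 0 ≤ D * q ^ n * r :=
        mul_nonneg (mul_nonneg hD0 (pow_nonneg hq0.le n)) hr0
      linarith [hinv n]
    have hT'ge : T ≤ T' := by
      rw [hT']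
      have : 0 ≤ D * r := mul_nonneg hD0 hr0
      linarith
    refine ⟨T', hT'ge, fun t ht => ?_⟩
    have htT : T ≤ t := hT'ge.trans ht
    have hle : ∀ n, m t ≤ a / 2 ^ n := by
      intro n
      exact (hmono (mem_Ici.mpr (hmem n)) (mem_Ici.mpr htT) ((hseqT' n).trans ht)).trans (hbound n)
    have htendsto : Filter.Tendsto (fun n : ℕ => a / 2 ^ n) Filter.atTop (nhds 0) := by
      have h := tendsto_pow_atTop_nhds_zero_of_lt_one (by norm_num : (0:ℝ) ≤ 1 / 2)
        (by norm_num : (1 / 2 : ℝ) < 1)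
      have h2 := h.const_mul a
      simpa [div_eq_mul_inv, ← inv_pow, one_div] using h2
    have hle0 : m t ≤ 0 := ge_of_tendsto' htendsto hle
    exact le_antisymm hle0 (hm0 t (mem_Ici.mpr htT))
end
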